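/- arXiv:1703.07263 — 7 statements merged into one kernel-verified Lean document; each statement's English description precedes it below -/
import Mathlib

section
/- Let n ≥ 2 be an integer and f : ℤ → ℤ a polynomial with integer coefficients such that f(m) > 0 for every positive integer m. For any integer k with 1 ≤ k ≤ n-1, the multiple harmonic star sum satisfies H*_{k+1,f}(n) < H*_{1,f}(n) · H*_{k,f}(n), where H*_{k,f}(n) = ∑_{1 ≤ i₁ ≤ ⋯ ≤ i_k ≤ n} ∏_{j=1}^k 1/f(i_j). -/
open Finset

/-- The multiple harmonic star sum `H*_{k,f}(n) = ∑_{1 ≤ i₁ ≤ ⋯ ≤ i_k ≤ n} ∏_j 1/f(i_j)`. -/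
noncomputable def Hstar (f : Polynomial ℤ) (k n : ℕ) : ℚ :=
  ∑ i ∈ (Fintype.piFinset fun _ : Fin k => Finset.Icc 1 n).filter
      (fun i => ∀ a b : Fin k, a ≤ b → i a ≤ i b),
    ∏ j : Fin k, (1 : ℚ) / ((f.eval ((i j : ℕ) : ℤ) : ℤ) : ℚ)

theorem stmt0 (n : ℕ) (hn : 2 ≤ n) (f : Polynomial ℤ)
    (hf : ∀ m : ℤ, 0 < m → 0 < f.eval m)
    (k : ℕ) (hk1 : 1 ≤ k) (hk2 : k ≤ n - 1) :
    Hstar f (k + 1) n < Hstar f 1 n * Hstar f k n := by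
  classical
  have hgpos : ∀ m : ℕ, m ∈ Icc 1 n → (0:ℚ) < 1 / ((f.eval ((m:ℕ):ℤ) : ℤ) : ℚ) := by
    intro m hm
    rw [mem_Icc] at hm
    have h := hf m (by exact_mod_cast hm.1)
    have : (0:ℚ) < ((f.eval (m:ℤ) : ℤ) : ℚ) := by exact_mod_cast h
    positivity
  set S1 := (Fintype.piFinset fun _ : Fin 1 => Finset.Icc 1 n).filter
      (fun i => ∀ a b : Fin 1, a ≤ b → i a ≤ i b) with hS1
  set Sk := (Fintype.piFinset fun _ : Fin k => Finset.Icc 1 n).filter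
      (fun i => ∀ a b : Fin k, a ≤ b → i a ≤ i b) with hSk
  set T := (Fintype.piFinset fun _ : Fin (k+1) => Finset.Icc 1 n).filter
      (fun i => ∀ a b : Fin (k+1), a ≤ b → i a ≤ i b) with hT
  set F : (Fin 1 → ℕ) × (Fin k → ℕ) → ℚ := fun p =>
    (∏ j : Fin 1, (1:ℚ)/((f.eval ((p.1 j : ℕ):ℤ):ℤ):ℚ)) *
    (∏ j : Fin k, (1:ℚ)/((f.eval ((p.2 j : ℕ):ℤ):ℤ):ℚ)) with hF
  have hRHS : Hstar f 1 n * Hstar f k n = ∑ p ∈ S1 ×ˢ Sk, F p := by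
    rw [Hstar, Hstar, ← hS1, ← hSk, Finset.sum_mul_sum, Finset.sum_product]
  set φ : (Fin (k+1) → ℕ) → (Fin 1 → ℕ) × (Fin k → ℕ) :=
    fun i => (fun _ => i 0, fun j => i j.succ) with hφ
  have hinj : Set.InjOn φ T := by
    intro i _ i' _ h
    funext j
    refine Fin.cases ?_ ?_ j
    · exact congrFun (congrArg Prod.fst h) 0
    · intro j'; exact congrFun (congrArg Prod.snd h) j'
  have hLHS : Hstar f (k+1) n = ∑ p ∈ T.image φ, F p := by
    rw [Finset.sum_image hinj, Hstar, ← hT]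
    refine Finset.sum_congr rfl fun i _ => ?_
    rw [Fin.prod_univ_succ]
    simp [hF, hφ]
  rw [hLHS, hRHS]
  have hmemF : ∀ p ∈ S1 ×ˢ Sk, (0:ℚ) < F p := by
    intro p hp
    rw [Finset.mem_product, hS1, hSk, Finset.mem_filter, Finset.mem_filter,
      Fintype.mem_piFinset, Fintype.mem_piFinset] at hp
    have h1 : (0:ℚ) < ∏ j : Fin 1, (1:ℚ)/((f.eval ((p.1 j : ℕ):ℤ):ℤ):ℚ) :=
      Finset.prod_pos fun j _ => hgpos _ (hp.1.1 j)
    have h2 : (0:ℚ) < ∏ j : Fin k, (1:ℚ)/((f.eval ((p.2 j : ℕ):ℤ):ℤ):ℚ) :=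
      Finset.prod_pos fun j _ => hgpos _ (hp.2.1 j)
    exact mul_pos h1 h2
  have hsub : T.image φ ⊆ S1 ×ˢ Sk := by
    intro p hp
    obtain ⟨i, hi, rfl⟩ := Finset.mem_image.mp hp
    rw [hT, Finset.mem_filter, Fintype.mem_piFinset] at hi
    rw [Finset.mem_product, hS1, hSk, Finset.mem_filter, Finset.mem_filter,
      Fintype.mem_piFinset, Fintype.mem_piFinset]
    refine ⟨⟨fun a => hi.1 0, fun a b _ => le_refl _⟩,
      ⟨fun a => hi.1 a.succ, fun a b hab => hi.2 a.succ b.succ ?_⟩⟩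
    exact Fin.succ_le_succ_iff.mpr hab
  set p₀ : (Fin 1 → ℕ) × (Fin k → ℕ) := (fun _ => 2, fun _ => 1) with hp₀
  have hp₀mem : p₀ ∈ S1 ×ˢ Sk := by
    rw [Finset.mem_product, hS1, hSk, Finset.mem_filter, Finset.mem_filter,
      Fintype.mem_piFinset, Fintype.mem_piFinset]
    refine ⟨⟨fun a => ?_, fun a b _ => le_refl _⟩,
      ⟨fun a => ?_, fun a b _ => le_refl _⟩⟩
    · simp only [hp₀, mem_Icc]; omega
    · simp only [hp₀, mem_Icc]; omega
  have hp₀not : p₀ ∉ T.image φ := by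
    intro h
    obtain ⟨i, hi, hφi⟩ := Finset.mem_image.mp h
    rw [hT, Finset.mem_filter] at hi
    have h0 : i 0 = 2 := congrFun (congrArg Prod.fst hφi) 0
    set j : Fin k := ⟨0, hk1⟩ with hj
    have h1 : i j.succ = 1 := congrFun (congrArg Prod.snd hφi) j
    have := hi.2 0 j.succ (Fin.zero_le _)
    omega
  exact Finset.sum_lt_sum_of_subset hsub hp₀mem hp₀not (hmemF _ hp₀mem)
    (fun q hq _ => (hmemF q hq).le)
end

section
/- Let n ≥ 3 be an integer and f a polynomial with integer coefficients such that f(2)² > f(1)·f(3) and f(m) > 0 for all positive integers m. Then for any positive integer k ≤ n-1, H*_{k+1,f}(n) < (1/f(1) + ∑_{t=3}^n 1/f(t)) · H*_{k,f}(n). -/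
/-!
Write `a t = 1 / f t`, so that `H*_{k,f}(n)` is the sum of `∏_{t ∈ S} a t` over the multisets `S` of
size `k` with elements in `[1, n]`. Multiplying by `∑_{t ∈ T} a t` with `T = [1, n] \ {2}` produces
every multiset `S` of size `k + 1` with multiplicity `#(T ∩ S)`, which is at least `1` except for
`S = {2, …, 2}`, where it is `0`. The deficit `a 2 ^ (k + 1)` of that one multiset is outweighed by
the surplus of `S = {1, 3, 2, …, 2}`, counted twice, because `a 2 ^ 2 < a 1 * a 3`.
-/

open Finset

variable {α R : Type*}

lemma sum_monotone_piFinset_eq_sum_sym [LinearOrder α] [CommSemiring R] (s : Finset α) (k : ℕ)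
    (g : α → R) :
    ∑ i ∈ (Fintype.piFinset fun _ : Fin k => s).filter (fun i => ∀ a b : Fin k, a ≤ b → i a ≤ i b),
        ∏ j, g (i j) =
      ∑ S ∈ s.sym k, ((S : Multiset α).map g).prod := by
  refine sum_bij' (fun i _ => ⟨(List.ofFn i : Multiset α), by simp⟩)
    (fun S _ j => ((S : Multiset α).sort (· ≤ ·)).get (j.cast (by simp)))
    ?_ ?_ ?_ ?_ ?_
  · intro i hi
    simp only [mem_filter, Fintype.mem_piFinset] at hi
    refine mem_sym_iff.mpr fun x hx => ?_
    obtain ⟨j, rfl⟩ := List.mem_ofFn.mp (Multiset.mem_coe.mp hx)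
    exact hi.1 j
  · intro S hS
    simp only [mem_filter, Fintype.mem_piFinset]
    refine ⟨fun j => mem_sym_iff.mp hS _ ?_, fun a b hab => ?_⟩
    · rw [← Sym.mem_coe, ← Multiset.mem_sort (· ≤ ·)]
      exact List.get_mem _ _
    · exact (Multiset.pairwise_sort _ _).rel_get_of_le (by simpa using hab)
  · intro i hi
    have hmono : Monotone i := fun a b hab => (mem_filter.mp hi).2 a b hab
    have hsorted : (List.ofFn i : Multiset α).sort (· ≤ ·) = List.ofFn i := by
      rw [Multiset.coe_sort]
      exact List.mergeSort_eq_self _ (by simpa using hmono.sortedLE_ofFn.pairwise)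
    funext j
    simp only [Sym.coe_mk, List.get_of_eq hsorted, List.get_eq_getElem, List.getElem_ofFn]
    rfl
  · intro S _
    apply Sym.coe_injective
    conv_rhs => rw [← Multiset.sort_eq (S : Multiset α) (· ≤ ·)]
    simp only [Sym.coe_mk]
    congr 1
    exact List.ext_get (by simp) fun m _ _ => by simp
  · intro i _
    simp only [← List.prod_ofFn, Sym.coe_mk, Multiset.map_coe, List.map_ofFn, Multiset.prod_coe]
    rfl

section Identity

variable [DecidableEq α] [CommSemiring R] (a : α → R)

lemma sum_sym_filter_mem_eq_mul {s : Finset α} {t : α} (ht : t ∈ s) (k : ℕ) :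
    ∑ S ∈ s.sym (k + 1) with t ∈ S, ((S : Multiset α).map a).prod =
      a t * ∑ S ∈ s.sym k, ((S : Multiset α).map a).prod := by
  rw [mul_sum]
  refine sum_bij' (fun S hS => S.erase t (mem_filter.mp hS).2) (fun S _ => t ::ₛ S)
    ?_ ?_ ?_ ?_ ?_
  · intro S hS
    rw [mem_filter, mem_sym_iff] at hS
    refine mem_sym_iff.mpr fun b hb => hS.1 b ?_
    rw [← Sym.mem_coe, Sym.coe_erase] at hb
    exact Multiset.mem_of_mem_erase hb
  · intro S hS
    refine mem_filter.mpr ⟨mem_sym_iff.mpr fun b hb => ?_, Sym.mem_cons_self t S⟩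
    rcases Sym.mem_cons.mp hb with rfl | hb
    exacts [ht, mem_sym_iff.mp hS b hb]
  · intro S _
    exact Sym.cons_erase _
  · intro S _
    exact Sym.erase_cons_head S t _
  · intro S hS
    conv_lhs => rw [← Sym.cons_erase (mem_filter.mp hS).2]
    rw [Sym.coe_cons, Multiset.map_cons, Multiset.prod_cons]

lemma sum_mul_sum_sym {s T : Finset α} (hT : T ⊆ s) (k : ℕ) :
    (∑ t ∈ T, a t) * ∑ S ∈ s.sym k, ((S : Multiset α).map a).prod =
      ∑ S ∈ s.sym (k + 1), (#{t ∈ T | t ∈ S} : R) * ((S : Multiset α).map a).prod := by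
  rw [sum_mul, sum_congr rfl fun t ht => (sum_sym_filter_mem_eq_mul a (hT ht) k).symm]
  simp_rw [sum_filter]
  rw [sum_comm]
  refine sum_congr rfl fun S _ => ?_
  rw [← sum_filter, sum_const, nsmul_eq_mul]

end Identity

section OrderedRing

variable [DecidableEq α] [CommRing R] [LinearOrder R] [IsStrictOrderedRing R] {a : α → R}
  {s : Finset α} {k : ℕ}

lemma mul_sub_pow_le_sum_erase_mul_sub {b : α} {S₁ : Sym α (k + 1)} (ha : ∀ t ∈ s, 0 ≤ a t)
    (hb : b ∈ s) (hS₁ : S₁ ∈ s.sym (k + 1)) (hne : S₁ ≠ Sym.replicate (k + 1) b) :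
    ((#{t ∈ s.erase b | t ∈ S₁} : R) - 1) * ((S₁ : Multiset α).map a).prod - a b ^ (k + 1) ≤
      (∑ t ∈ s.erase b, a t) * ∑ S ∈ s.sym k, ((S : Multiset α).map a).prod -
        ∑ S ∈ s.sym (k + 1), ((S : Multiset α).map a).prod := by
  set S₀ := Sym.replicate (k + 1) b
  have hcount₀ : #{t ∈ s.erase b | t ∈ S₀} = 0 :=
    card_eq_zero.mpr <| filter_eq_empty_iff.mpr fun t ht htS =>
      (mem_erase.mp ht).1 (Sym.mem_replicate.mp htS).2
  have hterm_nonneg : ∀ S ∈ s.sym (k + 1), S ≠ S₀ →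
      0 ≤ ((#{t ∈ s.erase b | t ∈ S} : R) - 1) * ((S : Multiset α).map a).prod := by
    intro S hS hS₀
    obtain ⟨x, hxS, hxb⟩ : ∃ x ∈ S, x ≠ b := by simpa [S₀, Sym.eq_replicate] using hS₀
    have hcount : 1 ≤ #{t ∈ s.erase b | t ∈ S} :=
      card_pos.mpr ⟨x, mem_filter.mpr ⟨mem_erase.mpr ⟨hxb, mem_sym_iff.mp hS x hxS⟩, hxS⟩⟩
    refine mul_nonneg (sub_nonneg.mpr (by exact_mod_cast hcount)) (Multiset.prod_nonneg ?_)
    simp only [Multiset.mem_map]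
    rintro _ ⟨t, ht, rfl⟩
    exact ha t (mem_sym_iff.mp hS t ht)
  rw [sum_mul_sum_sym a (erase_subset b s), ← sum_sub_distrib]
  calc _ = ∑ S ∈ {S₀, S₁},
          ((#{t ∈ s.erase b | t ∈ S} : R) - 1) * ((S : Multiset α).map a).prod := by
        rw [sum_pair hne.symm, hcount₀]
        simp only [S₀, Nat.cast_zero, Sym.coe_replicate, Multiset.map_replicate,
          Multiset.prod_replicate]
        ring
    _ ≤ ∑ S ∈ s.sym (k + 1),
          ((#{t ∈ s.erase b | t ∈ S} : R) - 1) * ((S : Multiset α).map a).prod := by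
        refine sum_le_sum_of_subset_of_nonneg ?_ fun S hS hS' => hterm_nonneg S hS ?_
        · exact insert_subset (replicate_mem_sym hb _) (singleton_subset_iff.mpr hS₁)
        · exact fun h => hS' (h ▸ mem_insert_self _ _)
    _ = _ := sum_congr rfl fun _ _ => by ring

lemma sum_sym_succ_lt_sum_erase_mul {x y z : α} (ha : ∀ t ∈ s, 0 < a t) (hx : x ∈ s) (hy : y ∈ s)
    (hz : z ∈ s) (hxy : x ≠ y) (hzy : z ≠ y) (hxz : x ≠ z) (h : a y ^ 2 < a x * a z)
    (hk : 1 ≤ k) :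
    ∑ S ∈ s.sym (k + 1), ((S : Multiset α).map a).prod <
      (∑ t ∈ s.erase y, a t) * ∑ S ∈ s.sym k, ((S : Multiset α).map a).prod := by
  obtain ⟨j, rfl⟩ := Nat.exists_eq_add_of_le' hk
  set S₁ : Sym α (j + 1 + 1) := x ::ₛ z ::ₛ Sym.replicate j y
  have hS₁ : S₁ ∈ s.sym (j + 1 + 1) := by
    simp only [S₁, mem_sym_iff, Sym.mem_cons, Sym.mem_replicate]
    rintro t (rfl | rfl | ⟨-, rfl⟩) <;> assumption
  have hne : S₁ ≠ Sym.replicate (j + 1 + 1) y :=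
    fun h => hxy (Sym.eq_replicate.mp h x (Sym.mem_cons_self _ _))
  have hcount : (2 : R) ≤ #{t ∈ s.erase y | t ∈ S₁} := by
    have hsub : {x, z} ⊆ {t ∈ s.erase y | t ∈ S₁} := by
      simp [insert_subset_iff, S₁, hx, hz, hxy, hzy]
    exact_mod_cast (card_pair hxz).symm.le.trans (card_le_card hsub)
  have hweight : ((S₁ : Multiset α).map a).prod = a x * a z * a y ^ j := by
    simp only [S₁, Sym.coe_cons, Sym.coe_replicate, Multiset.map_cons, Multiset.prod_cons,
      Multiset.map_replicate, Multiset.prod_replicate, mul_assoc]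
  have hpos : 0 < a x * a z * a y ^ j := by
    have := ha y hy; have := ha x hx; have := ha z hz; positivity
  have hgain : a y ^ (j + 1 + 1) < a x * a z * a y ^ j := by
    rw [pow_add, pow_add, pow_one, mul_assoc, ← sq, mul_comm]
    exact mul_lt_mul_of_pos_right h (pow_pos (ha y hy) j)
  have key := mul_sub_pow_le_sum_erase_mul_sub (fun t ht => (ha t ht).le) hy hS₁ hne
  rw [hweight] at key
  have hdominant :
      a x * a z * a y ^ j ≤ ((#{t ∈ s.erase y | t ∈ S₁} : R) - 1) * (a x * a z * a y ^ j) :=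
    le_mul_of_one_le_left hpos.le (by linarith)
  linarith

end OrderedRing

lemma Hstar_eq_sum_sym (f : Polynomial ℤ) (k n : ℕ) :
    Hstar f k n = ∑ S ∈ (Icc 1 n).sym k,
      ((S : Multiset ℕ).map fun t : ℕ => (1 : ℚ) / ((f.eval (t : ℤ) : ℤ) : ℚ)).prod :=
  sum_monotone_piFinset_eq_sum_sym (Icc 1 n) k fun t : ℕ => (1 : ℚ) / ((f.eval (t : ℤ) : ℤ) : ℚ)

theorem stmt2_general (n : ℕ) (hn : 3 ≤ n) (f : Polynomial ℤ)
    (hf : ∀ m : ℤ, 0 < m → 0 < f.eval m)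
    (hf2 : f.eval 1 * f.eval 3 < (f.eval 2) ^ 2)
    (k : ℕ) (hk1 : 1 ≤ k) :
    Hstar f (k + 1) n <
      ((1 : ℚ) / ((f.eval 1 : ℤ) : ℚ) +
        ∑ t ∈ Finset.Icc 3 n, (1 : ℚ) / ((f.eval ((t : ℕ) : ℤ) : ℤ) : ℚ)) * Hstar f k n := by
  set a : ℕ → ℚ := fun t => (1 : ℚ) / ((f.eval (t : ℤ) : ℤ) : ℚ)
  have hf_pos (m : ℤ) (hm : 0 < m) : (0 : ℚ) < f.eval m := by exact_mod_cast hf m hm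
  have ha : ∀ t ∈ Icc 1 n, 0 < a t := fun t ht =>
    one_div_pos.mpr (hf_pos t (by have := (mem_Icc.mp ht).1; omega))
  have ha_sq_lt : a 2 ^ 2 < a 1 * a 3 := by
    simp only [a, div_pow, one_pow, div_mul_div_comm, one_mul]
    exact one_div_lt_one_div_of_lt (mul_pos (hf_pos 1 one_pos) (hf_pos 3 three_pos))
      (by exact_mod_cast hf2)
  have hcoef : (1 : ℚ) / ((f.eval 1 : ℤ) : ℚ) +
      ∑ t ∈ Icc 3 n, (1 : ℚ) / ((f.eval ((t : ℕ) : ℤ) : ℤ) : ℚ) = ∑ t ∈ (Icc 1 n).erase 2, a t := by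
    rw [show (Icc 1 n).erase 2 = insert 1 (Icc 3 n) by ext; simp; omega, sum_insert (by simp)]
    simp [a]
  rw [Hstar_eq_sum_sym, Hstar_eq_sum_sym, hcoef]
  exact sum_sym_succ_lt_sum_erase_mul ha (x := 1) (z := 3) (by simp; omega) (by simp; omega)
    (by simp; omega) (by norm_num) (by norm_num) (by norm_num) ha_sq_lt hk1

theorem stmt2 (n : ℕ) (hn : 3 ≤ n) (f : Polynomial ℤ)
    (hf : ∀ m : ℤ, 0 < m → 0 < f.eval m)
    (hf2 : f.eval 1 * f.eval 3 < (f.eval 2) ^ 2)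
    (k : ℕ) (hk1 : 1 ≤ k) (hk2 : k ≤ n - 1) :
    Hstar f (k + 1) n <
      ((1 : ℚ) / ((f.eval 1 : ℤ) : ℚ) +
        ∑ t ∈ Finset.Icc 3 n, (1 : ℚ) / ((f.eval ((t : ℕ) : ℤ) : ℤ) : ℚ)) * Hstar f k n :=
  stmt2_general n hn f hf hf2 k hk1
end

section
/- Let k, n be positive integers with 1 ≤ k ≤ n, let f(x) = 2x − 1, and let s⃗ = (s₁,…,s_k) be a k-tuple of positive integers. If p is a prime with n/(k + 1/2) < p ≤ n/k and p > 2k, then the p-adic valuation of H_{k,f}(s⃗,n) := ∑_{1 ≤ i₁ < ⋯ < i_k ≤ n} ∏_{j=1}^k 1/(2i_j − 1)^{s_j} equals −(s₁ + ⋯ + s_k). -/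
open Finset

/-- `H_{k,f}(s⃗,n) = ∑_{1 ≤ i₁ < ⋯ < i_k ≤ n} ∏_j 1/(2 i_j − 1)^{s_j}` for `f(x) = 2x − 1`. -/
noncomputable def Hodd (k n : ℕ) (s : Fin k → ℕ) : ℚ :=
  ∑ i ∈ (Fintype.piFinset fun _ : Fin k => Finset.Icc 1 n).filter
      (fun i => ∀ p q : Fin k, p < q → i p < i q),
    ∏ j : Fin k, (1 : ℚ) / (2 * ((i j : ℕ) : ℚ) - 1) ^ (s j)

/-!
Since `2n < (2k+1)p ≤ p²`, each odd number `2i - 1 ≤ 2n - 1` is divisible by `p` at most once,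
and the odd multiples of `p` in that range are exactly `p, 3p, …, (2k-1)p` (as `kp ≤ n`). Hence a
single strictly increasing tuple has `p ∣ 2i_j - 1` for every `j`, namely `2i_j - 1 = (2j+1)p`; its
term has valuation `-(s₁ + ⋯ + s_k)`, and every other term misses some `s_j ≥ 1`. A term of strictly
smallest valuation fixes the valuation of the sum, by the ultrametric inequality.
-/

theorem StrictMono.eq_of_range_subset {α β : Type*} [LinearOrder α] [Finite α] [Preorder β]
    {f g : α → β} (hf : StrictMono f) (hg : StrictMono g) (h : Set.range f ⊆ Set.range g) :
    f = g :=
  (hf.range_inj hg).1 <| Set.eq_of_subset_of_ncard_le h <| by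
    rw [Set.ncard_range_of_injective hf.injective, Set.ncard_range_of_injective hg.injective]

section Padic

variable {p : ℕ} [hp : Fact p.Prime]

theorem padicValRat_prod {ι : Type*} {s : Finset ι} {f : ι → ℚ} (hf : ∀ i ∈ s, f i ≠ 0) :
    padicValRat p (∏ i ∈ s, f i) = ∑ i ∈ s, padicValRat p (f i) := by
  classical
  induction s using Finset.induction_on with
  | empty => simp
  | insert a t ha ih =>
    rw [prod_insert ha, sum_insert ha, padicValRat.mul (hf a (mem_insert_self a t))
      (prod_ne_zero_iff.2 fun i hi => hf i (mem_insert_of_mem hi)),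
      ih fun i hi => hf i (mem_insert_of_mem hi)]

theorem padicNorm_lt_padicNorm_of_padicValRat_lt {q r : ℚ} (hq : q ≠ 0) (hr : r ≠ 0)
    (h : padicValRat p q < padicValRat p r) : padicNorm p r < padicNorm p q := by
  rw [padicNorm.eq_zpow_of_nonzero hq, padicNorm.eq_zpow_of_nonzero hr]
  exact zpow_lt_zpow_right₀ (mod_cast hp.out.one_lt) (neg_lt_neg h)

theorem padicValRat_eq_of_padicNorm_eq {q r : ℚ} (hq : q ≠ 0) (hr : r ≠ 0)
    (h : padicNorm p q = padicNorm p r) : padicValRat p q = padicValRat p r := by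
  rw [padicNorm.eq_zpow_of_nonzero hq, padicNorm.eq_zpow_of_nonzero hr] at h
  exact neg_inj.1 <| zpow_right_injective₀ (mod_cast hp.out.pos) (mod_cast hp.out.ne_one) h

theorem padicValRat_sum_eq_of_lt {ι : Type*} [DecidableEq ι] {s : Finset ι} {f : ι → ℚ} {a : ι}
    (ha : a ∈ s) (hf : ∀ i ∈ s, f i ≠ 0)
    (h : ∀ i ∈ s, i ≠ a → padicValRat p (f a) < padicValRat p (f i)) :
    padicValRat p (∑ i ∈ s, f i) = padicValRat p (f a) := by
  have hfa := hf a ha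
  have hrest : padicNorm p (∑ i ∈ s.erase a, f i) < padicNorm p (f a) := by
    refine padicNorm.sum_lt' (fun i hi => ?_) (lt_of_le_of_ne (padicNorm.nonneg _)
      (padicNorm.nonzero hfa).symm)
    obtain ⟨hia, his⟩ := mem_erase.1 hi
    exact padicNorm_lt_padicNorm_of_padicValRat_lt hfa (hf i his) (h i his hia)
  have hnorm : padicNorm p (∑ i ∈ s, f i) = padicNorm p (f a) := by
    rw [← add_sum_erase s f ha, padicNorm.add_eq_max_of_ne hrest.ne', max_eq_left hrest.le]
  refine padicValRat_eq_of_padicNorm_eq (fun h0 => ?_) hfa hnorm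
  exact padicNorm.nonzero hfa (by rw [← hnorm, h0, padicNorm.zero])

theorem padicValNat_le_one_of_lt_sq {m : ℕ} (hm : m ≠ 0) (h : m < p ^ 2) :
    padicValNat p m ≤ 1 := by
  by_contra! hv
  exact (Nat.le_of_dvd (Nat.pos_of_ne_zero hm) ((padicValNat_dvd_iff_le hm).2 hv)).not_gt h

end Padic

namespace Hodd

def indexSet (k n : ℕ) : Finset (Fin k → ℕ) :=
  (Fintype.piFinset fun _ : Fin k => Icc 1 n).filter fun i => ∀ p q : Fin k, p < q → i p < i q

noncomputable def term {k : ℕ} (s i : Fin k → ℕ) : ℚ :=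
  ∏ j : Fin k, (1 : ℚ) / (2 * ((i j : ℕ) : ℚ) - 1) ^ (s j)

theorem eq_sum_term (k n : ℕ) (s : Fin k → ℕ) : Hodd k n s = ∑ i ∈ indexSet k n, term s i := rfl

variable {k n : ℕ}

theorem mem_indexSet {i : Fin k → ℕ} : i ∈ indexSet k n ↔ (∀ j, i j ∈ Icc 1 n) ∧ StrictMono i := by
  simp only [indexSet, mem_filter, Fintype.mem_piFinset, StrictMono]

theorem one_le_of_mem_indexSet {i : Fin k → ℕ} (hi : i ∈ indexSet k n) (j : Fin k) : 1 ≤ i j :=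
  (mem_Icc.1 ((mem_indexSet.1 hi).1 j)).1

theorem two_mul_cast_sub_one {m : ℕ} (hm : 1 ≤ m) : 2 * (m : ℚ) - 1 = ((2 * m - 1 : ℕ) : ℚ) := by
  rw [Nat.cast_sub (by omega)]
  push_cast
  ring

theorem two_mul_cast_sub_one_ne_zero {m : ℕ} (hm : 1 ≤ m) : 2 * (m : ℚ) - 1 ≠ 0 := by
  rw [two_mul_cast_sub_one hm]
  exact_mod_cast (by omega : 2 * m - 1 ≠ 0)

theorem term_ne_zero (s : Fin k → ℕ) {i : Fin k → ℕ} (hi : ∀ j, 1 ≤ i j) : term s i ≠ 0 :=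
  prod_ne_zero_iff.2 fun j _ =>
    one_div_ne_zero (pow_ne_zero _ (two_mul_cast_sub_one_ne_zero (hi j)))

theorem padicValRat_term {p : ℕ} [Fact p.Prime] (s : Fin k → ℕ) {i : Fin k → ℕ}
    (hi : ∀ j, 1 ≤ i j) :
    padicValRat p (term s i) = -∑ j, (s j : ℤ) * padicValNat p (2 * i j - 1) := by
  rw [term, padicValRat_prod fun j _ => ?_, ← sum_neg_distrib]
  · refine sum_congr rfl fun j _ => ?_
    rw [two_mul_cast_sub_one (hi j), one_div, padicValRat.inv, padicValRat.pow,
      padicValRat.of_nat]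
  · exact one_div_ne_zero (pow_ne_zero _ (two_mul_cast_sub_one_ne_zero (hi j)))

variable {p : ℕ}

/-- The index `i` with `2 * i - 1 = (2 * j + 1) * p` (for odd `p`). -/
def oddMultipleIndex (p j : ℕ) : ℕ := ((2 * j + 1) * p + 1) / 2

theorem two_mul_oddMultipleIndex_sub_one (hp : Odd p) (j : ℕ) :
    2 * oddMultipleIndex p j - 1 = (2 * j + 1) * p := by
  have := Nat.odd_iff.1 ((odd_two_mul_add_one j).mul hp)
  unfold oddMultipleIndex
  omega

theorem exists_eq_oddMultipleIndex {i : ℕ} (hi : 1 ≤ i) (h : p ∣ 2 * i - 1) :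
    ∃ j, (2 * j + 1) * p = 2 * i - 1 ∧ i = oddMultipleIndex p j := by
  obtain ⟨c, hc⟩ := h
  have hodd : Odd (p * c) := by rw [← hc, Nat.odd_iff]; omega
  obtain ⟨j, rfl⟩ := (Nat.odd_mul.1 hodd).2
  have := mul_comm (2 * j + 1) p
  refine ⟨j, by omega, ?_⟩
  unfold oddMultipleIndex
  omega

theorem one_le_oddMultipleIndex (hp : 0 < p) (j : ℕ) : 1 ≤ oddMultipleIndex p j := by
  have := Nat.le_mul_of_pos_left p (by omega : 0 < 2 * j + 1)
  unfold oddMultipleIndex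
  omega

def oddMultipleTuple (k p : ℕ) : Fin k → ℕ := fun j => oddMultipleIndex p j

theorem oddMultipleTuple_strictMono (hp : Odd p) : StrictMono (oddMultipleTuple k p) := by
  intro j j' h
  have h₁ := two_mul_oddMultipleIndex_sub_one hp j
  have h₂ := two_mul_oddMultipleIndex_sub_one hp j'
  have : (2 * (j : ℕ) + 1) * p < (2 * j' + 1) * p :=
    Nat.mul_lt_mul_of_pos_right (by omega) hp.pos
  simp only [oddMultipleTuple]
  omega

theorem oddMultipleTuple_mem_indexSet (hp : Odd p) (hkp : k * p ≤ n) :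
    oddMultipleTuple k p ∈ indexSet k n := by
  refine mem_indexSet.2 ⟨fun j => ?_, oddMultipleTuple_strictMono hp⟩
  have h₁ := two_mul_oddMultipleIndex_sub_one hp j
  have : (2 * (j : ℕ) + 1) * p + p ≤ 2 * (k * p) := by nlinarith [j.isLt]
  simp only [oddMultipleTuple, mem_Icc]
  exact ⟨one_le_oddMultipleIndex hp.pos j, by omega⟩

theorem eq_oddMultipleTuple_of_forall_dvd (hp : Odd p) (hn : 2 * n < (2 * k + 1) * p)
    {i : Fin k → ℕ} (hi : i ∈ indexSet k n) (hdvd : ∀ j, p ∣ 2 * i j - 1) :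
    i = oddMultipleTuple k p := by
  obtain ⟨hmem, hmono⟩ := mem_indexSet.1 hi
  refine hmono.eq_of_range_subset (oddMultipleTuple_strictMono hp) ?_
  rintro _ ⟨j, rfl⟩
  obtain ⟨hij₁, hijn⟩ := mem_Icc.1 (hmem j)
  obtain ⟨m, hm, him⟩ := exists_eq_oddMultipleIndex hij₁ (hdvd j)
  have hmk : m < k := by
    have : (2 * m + 1) * p < (2 * k + 1) * p := by omega
    have := Nat.lt_of_mul_lt_mul_right this
    omega
  exact ⟨⟨m, hmk⟩, him.symm⟩

section Valuation

variable [Fact p.Prime]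

theorem padicValNat_oddMultipleTuple (hp : Odd p) (hpk : 2 * k < p) (j : Fin k) :
    padicValNat p (2 * oddMultipleTuple k p j - 1) = 1 := by
  rw [oddMultipleTuple, two_mul_oddMultipleIndex_sub_one hp,
    padicValNat.mul (by omega) hp.pos.ne', padicValNat.self (Fact.out : p.Prime).one_lt,
    padicValNat.eq_zero_of_not_dvd (Nat.not_dvd_of_pos_of_lt (by omega) (by omega))]

theorem padicValRat_term_oddMultipleTuple (hp : Odd p) (hpk : 2 * k < p) (s : Fin k → ℕ) :
    padicValRat p (term s (oddMultipleTuple k p)) = -∑ j, (s j : ℤ) := by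
  rw [padicValRat_term (i := oddMultipleTuple k p) s fun j => one_le_oddMultipleIndex hp.pos j]
  simp [padicValNat_oddMultipleTuple hp hpk]

theorem padicValRat_term_oddMultipleTuple_lt (hp : Odd p) (hpk : 2 * k < p)
    (hn : 2 * n < (2 * k + 1) * p) {s : Fin k → ℕ} (hs : ∀ j, 1 ≤ s j) {i : Fin k → ℕ}
    (hi : i ∈ indexSet k n) (hne : i ≠ oddMultipleTuple k p) :
    padicValRat p (term s (oddMultipleTuple k p)) < padicValRat p (term s i) := by
  obtain ⟨hmem, -⟩ := mem_indexSet.1 hi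
  obtain ⟨j₀, hj₀⟩ : ∃ j, ¬p ∣ 2 * i j - 1 := by
    by_contra! h
    exact hne (eq_oddMultipleTuple_of_forall_dvd hp hn hi h)
  rw [padicValRat_term_oddMultipleTuple hp hpk, padicValRat_term s (one_le_of_mem_indexSet hi),
    neg_lt_neg_iff]
  refine sum_lt_sum (fun j _ => ?_) ⟨j₀, mem_univ _, ?_⟩
  · obtain ⟨hij₁, hijn⟩ := mem_Icc.1 (hmem j)
    have : (2 * k + 1) * p ≤ p ^ 2 := by rw [sq]; exact Nat.mul_le_mul_right p hpk
    have := padicValNat_le_one_of_lt_sq (p := p) (m := 2 * i j - 1) (by omega) (by omega)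
    exact mul_le_of_le_one_right (by positivity) (mod_cast this)
  · rw [padicValNat.eq_zero_of_not_dvd hj₀, Nat.cast_zero, mul_zero]
    exact_mod_cast hs j₀

end Valuation

end Hodd

theorem stmt6_general (k n : ℕ) (hk : 1 ≤ k) (s : Fin k → ℕ) (hs : ∀ j, 1 ≤ s j)
    (p : ℕ) (hp : p.Prime) (hp1 : (n : ℝ) / ((k : ℝ) + 1 / 2) < (p : ℝ))
    (hp2 : (p : ℝ) ≤ (n : ℝ) / (k : ℝ)) (hp3 : 2 * k < p) :
    padicValRat p (Hodd k n s) = -(∑ j : Fin k, (s j : ℤ)) := by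
  have := Fact.mk hp
  have hp_odd : Odd p := hp.odd_of_ne_two (by omega)
  have hkp : k * p ≤ n := by
    have := (le_div_iff₀ (by positivity : (0 : ℝ) < k)).1 hp2
    exact_mod_cast (by push_cast; linarith : ((k * p : ℕ) : ℝ) ≤ n)
  have hn : 2 * n < (2 * k + 1) * p := by
    have := (div_lt_iff₀ (by positivity : (0 : ℝ) < k + 1 / 2)).1 hp1
    exact_mod_cast (by push_cast; linarith : ((2 * n : ℕ) : ℝ) < ((2 * k + 1) * p : ℕ))
  rw [Hodd.eq_sum_term,
    padicValRat_sum_eq_of_lt (Hodd.oddMultipleTuple_mem_indexSet hp_odd hkp)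
      (fun i hi => Hodd.term_ne_zero s (Hodd.one_le_of_mem_indexSet hi))
      (fun i hi hne => Hodd.padicValRat_term_oddMultipleTuple_lt hp_odd hp3 hn hs hi hne),
    Hodd.padicValRat_term_oddMultipleTuple hp_odd hp3]

theorem stmt6 (k n : ℕ) (hk : 1 ≤ k) (hkn : k ≤ n) (s : Fin k → ℕ) (hs : ∀ j, 1 ≤ s j)
    (p : ℕ) (hp : p.Prime) (hp1 : (n : ℝ) / ((k : ℝ) + 1 / 2) < (p : ℝ))
    (hp2 : (p : ℝ) ≤ (n : ℝ) / (k : ℝ)) (hp3 : 2 * k < p) :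
    padicValRat p (Hodd k n s) = -(∑ j : Fin k, (s j : ℤ)) :=
  stmt6_general k n hk s hs p hp hp1 hp2 hp3
end

section
/- Let n, k be integers with 1 ≤ k ≤ n, let f(x) = x^m with m ≥ 1 an integer (more generally f(x) = a_m x^m with a_m ≥ 1), and let s⃗ = (s₁,…,s_k) be a k-tuple of positive integers. If n ≥ 2, then H*_{k,f}(s⃗,n) := ∑_{1 ≤ i₁ ≤ ⋯ ≤ i_k ≤ n} ∏_{j=1}^k 1/f(i_j)^{s_j} is not an integer. -/
/-!
By Bertrand's postulate there is a prime `p` with `n < 2 * p` and `p ≤ n`. Then `p` is the only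
multiple of `p` in `[1, n]`, so `‖c‖ₚ = 1` for every other `c` there. Hence the term of the
constant tuple `(p, …, p)` has strictly larger `p`-adic norm than every other term, and that norm
exceeds `1`. By the ultrametric inequality the whole sum has this norm, so it is not an integer.
-/

open Finset

/-- Multiple harmonic star sum with exponents for the monomial `f(x) = a_m x^m`. -/
noncomputable def HstarMono (aₘ : ℤ) (m k n : ℕ) (s : Fin k → ℕ) : ℚ :=
  ∑ i ∈ (Fintype.piFinset fun _ : Fin k => Finset.Icc 1 n).filter
      (fun i => ∀ a b : Fin k, a ≤ b → i a ≤ i b),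
    ∏ j : Fin k, (1 : ℚ) / (((aₘ : ℚ) * ((i j : ℕ) : ℚ) ^ m) ^ (s j))

theorem Nat.exists_prime_le_and_lt_two_mul {n : ℕ} (hn : 2 ≤ n) :
    ∃ p, p.Prime ∧ p ≤ n ∧ n < 2 * p := by
  obtain ⟨p, hp, hlt, hle⟩ := Nat.exists_prime_lt_and_le_two_mul (n / 2) (by omega)
  exact ⟨p, hp, by omega, by omega⟩

theorem Finset.prod_pow_lt_prod_pow {ι R : Type*} [CommSemiring R] [PartialOrder R]
    [IsStrictOrderedRing R] {s : Finset ι} {f g : ι → R} (e : ι → ℕ)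
    (hf : ∀ i ∈ s, 0 < f i) (hfg : ∀ i ∈ s, f i ≤ g i) (hlt : ∃ i ∈ s, f i < g i ∧ e i ≠ 0) :
    ∏ i ∈ s, f i ^ e i < ∏ i ∈ s, g i ^ e i := by
  obtain ⟨i, hi, hfgi, hei⟩ := hlt
  exact prod_lt_prod (fun j hj => pow_pos (hf j hj) _)
    (fun j hj => pow_le_pow_left₀ (hf j hj).le (hfg j hj) _)
    ⟨i, hi, pow_lt_pow_left₀ hfgi (hf i hi).le hei⟩

namespace padicNorm

variable {p : ℕ} [Fact p.Prime]

theorem sum_eq_of_lt {α : Type*} {F : α → ℚ} {s : Finset α} {a : α} (ha : a ∈ s)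
    (hlt : ∀ i ∈ s, i ≠ a → padicNorm p (F i) < padicNorm p (F a)) :
    padicNorm p (∑ i ∈ s, F i) = padicNorm p (F a) := by
  classical
  rw [← add_sum_erase s F ha]
  obtain hs | hs := (s.erase a).eq_empty_or_nonempty
  · rw [hs, sum_empty, add_zero]
  have hrest : padicNorm p (∑ i ∈ s.erase a, F i) < padicNorm p (F a) :=
    sum_lt hs fun i hi => hlt i (mem_of_mem_erase hi) (ne_of_mem_erase hi)
  rw [add_eq_max_of_ne hrest.ne', max_eq_left hrest.le]

theorem pos_of_ne_zero {q : ℚ} (hq : q ≠ 0) : 0 < padicNorm p q :=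
  (padicNorm.nonneg q).lt_of_ne' (padicNorm.nonzero hq)

theorem natCast_eq_one_of_lt_two_mul {c : ℕ} (hc0 : c ≠ 0) (hc : c < 2 * p) (hcp : c ≠ p) :
    padicNorm p c = 1 :=
  (nat_eq_one_iff c).2 fun hdvd => hcp (Nat.eq_of_dvd_of_lt_two_mul hc0 hdvd hc)

theorem prod_one_div_mul_pow {ι : Type*} (s : Finset ι) (a : ℚ) (m : ℕ) (c e : ι → ℕ) :
    padicNorm p (∏ j ∈ s, 1 / (a * (c j : ℚ) ^ m) ^ e j) =
      (∏ j ∈ s, (padicNorm p a * padicNorm p (c j) ^ m) ^ e j)⁻¹ := by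
  change IsAbsoluteValue.toAbsoluteValue (padicNorm p) _ = _
  simp only [one_div, map_prod, map_inv₀, AbsoluteValue.map_pow, AbsoluteValue.map_mul,
    IsAbsoluteValue.toAbsoluteValue_apply, ← prod_inv_distrib]

theorem prime_lt_natCast_of_lt_two_mul {c : ℕ} (hc0 : c ≠ 0) (hc : c < 2 * p) (hcp : c ≠ p) :
    padicNorm p p < padicNorm p c := by
  rw [natCast_eq_one_of_lt_two_mul hc0 hc hcp]
  exact padicNorm_p_lt_one_of_prime

theorem prime_le_natCast_of_lt_two_mul {c : ℕ} (hc0 : c ≠ 0) (hc : c < 2 * p) :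
    padicNorm p p ≤ padicNorm p c := by
  obtain rfl | hcp := eq_or_ne c p
  · exact le_rfl
  · exact (prime_lt_natCast_of_lt_two_mul hc0 hc hcp).le

end padicNorm

section DominantTerm

variable {p : ℕ} [Fact p.Prime] {a : ℚ} {m : ℕ} {ι : Type*} [Fintype ι] {e : ι → ℕ}

theorem padicNorm_mul_prime_pow_pos (ha : a ≠ 0) : 0 < padicNorm p a * padicNorm p p ^ m :=
  mul_pos (padicNorm.pos_of_ne_zero ha)
    (pow_pos (padicNorm.pos_of_ne_zero (Nat.cast_ne_zero.2 (Fact.out : p.Prime).ne_zero)) _)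

theorem padicNorm_prod_one_div_lt_of_ne (ha : a ≠ 0) (hm : m ≠ 0) (he : ∀ j, e j ≠ 0)
    {c : ι → ℕ} (hc : ∀ j, c j ≠ 0 ∧ c j < 2 * p) (hcp : c ≠ fun _ => p) :
    padicNorm p (∏ j, 1 / (a * (c j : ℚ) ^ m) ^ e j) <
      padicNorm p (∏ j, 1 / (a * (p : ℚ) ^ m) ^ e j) := by
  rw [padicNorm.prod_one_div_mul_pow, padicNorm.prod_one_div_mul_pow]
  have hpos := padicNorm_mul_prime_pow_pos (p := p) (m := m) ha
  obtain ⟨j, hj⟩ := Function.ne_iff.1 hcp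
  refine inv_strictAnti₀ (prod_pos fun j _ => pow_pos hpos _) ?_
  refine prod_pow_lt_prod_pow e (fun _ _ => hpos) (fun j _ => ?_) ⟨j, mem_univ j, ?_, he j⟩
  · exact mul_le_mul_of_nonneg_left (pow_le_pow_left₀ (padicNorm.nonneg _)
      (padicNorm.prime_le_natCast_of_lt_two_mul (hc j).1 (hc j).2) m) (padicNorm.nonneg _)
  · exact mul_lt_mul_of_pos_left (pow_lt_pow_left₀
      (padicNorm.prime_lt_natCast_of_lt_two_mul (hc j).1 (hc j).2 hj) (padicNorm.nonneg _) hm)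
      (padicNorm.pos_of_ne_zero ha)

theorem one_lt_padicNorm_prod_one_div [Nonempty ι] (ha : a ≠ 0) (ha1 : padicNorm p a ≤ 1)
    (hm : m ≠ 0) (he : ∀ j, e j ≠ 0) :
    1 < padicNorm p (∏ j, 1 / (a * (p : ℚ) ^ m) ^ e j) := by
  rw [padicNorm.prod_one_div_mul_pow]
  have hpos := padicNorm_mul_prime_pow_pos (p := p) (m := m) ha
  rw [one_lt_inv₀ (prod_pos fun j _ => pow_pos hpos _)]
  have hlt : padicNorm p a * padicNorm p p ^ m < 1 :=
    mul_lt_one_of_nonneg_of_lt_one_right ha1 (pow_nonneg (padicNorm.nonneg _) _)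
      (pow_lt_one₀ (padicNorm.nonneg _) padicNorm.padicNorm_p_lt_one_of_prime hm)
  obtain ⟨j⟩ := ‹Nonempty ι›
  simpa using prod_pow_lt_prod_pow (g := 1) e (fun _ _ => hpos) (fun _ _ => hlt.le)
    ⟨j, mem_univ j, hlt, he j⟩

end DominantTerm

theorem stmt14_general (aₘ : ℤ) (ha : 1 ≤ aₘ) (m : ℕ) (hm : 1 ≤ m) (k n : ℕ)
    (hk : 1 ≤ k) (hn : 2 ≤ n) (s : Fin k → ℕ) (hs : ∀ j, 1 ≤ s j) :
    ¬ ∃ z : ℤ, HstarMono aₘ m k n s = (z : ℚ) := by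
  rintro ⟨z, hz⟩
  obtain ⟨p, hp, hpn, hnp⟩ := Nat.exists_prime_le_and_lt_two_mul hn
  have : Fact p.Prime := ⟨hp⟩
  have : Nonempty (Fin k) := ⟨⟨0, hk⟩⟩
  have haQ : (aₘ : ℚ) ≠ 0 := by exact_mod_cast (by omega : aₘ ≠ 0)
  have hm0 : m ≠ 0 := Nat.one_le_iff_ne_zero.1 hm
  have hs0 : ∀ j, s j ≠ 0 := fun j => Nat.one_le_iff_ne_zero.1 (hs j)
  have hconst : (fun _ => p) ∈ (Fintype.piFinset fun _ : Fin k => Icc 1 n).filter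
      (fun i => ∀ a b : Fin k, a ≤ b → i a ≤ i b) := by
    simp [hp.one_le, hpn]
  have hnorm : padicNorm p (HstarMono aₘ m k n s) =
      padicNorm p (∏ j, 1 / ((aₘ : ℚ) * (p : ℚ) ^ m) ^ s j) := by
    refine padicNorm.sum_eq_of_lt hconst fun i hi hip => ?_
    refine padicNorm_prod_one_div_lt_of_ne haQ hm0 hs0 (fun j => ?_) hip
    have := mem_Icc.1 (Fintype.mem_piFinset.1 (mem_filter.1 hi).1 j)
    omega
  have hz_le := padicNorm.of_int (p := p) z
  rw [← hz, hnorm] at hz_le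
  exact (one_lt_padicNorm_prod_one_div haQ (padicNorm.of_int aₘ) hm0 hs0).not_ge hz_le

theorem stmt14 (aₘ : ℤ) (ha : 1 ≤ aₘ) (m : ℕ) (hm : 1 ≤ m) (k n : ℕ)
    (hk : 1 ≤ k) (hkn : k ≤ n) (hn : 2 ≤ n) (s : Fin k → ℕ) (hs : ∀ j, 1 ≤ s j) :
    ¬ ∃ z : ℤ, HstarMono aₘ m k n s = (z : ℚ) :=
  stmt14_general aₘ ha m hm k n hk hn s hs
end

section
/- Let n, k be integers with 1 ≤ k ≤ n, let f be a nonzero polynomial with nonnegative integer coefficients, and let s⃗ = (s₁,…,s_k) be a k-tuple of positive integers. Assume either deg f ≥ 2, or f is linear and s_j ≥ 2 for all 1 ≤ j ≤ k. Then H_{k,f}(s⃗,n) := ∑_{1 ≤ i₁ < ⋯ < i_k ≤ n} ∏_{j=1}^k 1/f(i_j)^{s_j} and H*_{k,f}(s⃗,n) := ∑_{1 ≤ i₁ ≤ ⋯ ≤ i_k ≤ n} ∏_{j=1}^k 1/f(i_j)^{s_j} are not integers, except when f(x) = x^m for some integer m ≥ 1 and n = k = 1, in which case both sums equal 1. -/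
open Finset Polynomial

/-- The multiple reciprocal sum `H_{k,f}(s⃗,n) = ∑_{1 ≤ i₁ < ⋯ < i_k ≤ n} ∏_j 1/f(i_j)^{s_j}`. -/
noncomputable def Hsum (f : Polynomial ℤ) (k n : ℕ) (s : Fin k → ℕ) : ℚ :=
  ∑ i ∈ (Fintype.piFinset fun _ : Fin k => Finset.Icc 1 n).filter
      (fun i => ∀ p q : Fin k, p < q → i p < i q),
    ∏ j : Fin k, (1 : ℚ) / ((f.eval ((i j : ℕ) : ℤ) : ℤ) : ℚ) ^ (s j)

/-- The multiple reciprocal star sum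
`H*_{k,f}(s⃗,n) = ∑_{1 ≤ i₁ ≤ ⋯ ≤ i_k ≤ n} ∏_j 1/f(i_j)^{s_j}`. -/
noncomputable def HsumStar (f : Polynomial ℤ) (k n : ℕ) (s : Fin k → ℕ) : ℚ :=
  ∑ i ∈ (Fintype.piFinset fun _ : Fin k => Finset.Icc 1 n).filter
      (fun i => ∀ p q : Fin k, p ≤ q → i p ≤ i q),
    ∏ j : Fin k, (1 : ℚ) / ((f.eval ((i j : ℕ) : ℤ) : ℤ) : ℚ) ^ (s j)


/-!
Every term `1 / f(i) ^ s` is at most `1 / i ^ 2`, and at most `1 / (i ^ 2 + 1)` when `f(1) ≥ 2`,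
so both sums are dominated by sums over chains `i₁ < ⋯ < i_k` (resp. `i₁ ≤ ⋯ ≤ i_k`) of products
of a single weight. Peeling off the first index of a chain gives a recursion for such chain sums,
and comparison with telescoping series (e.g. `1 / u ^ 2 < 2 / (2u - 1) - 2 / (2u + 1)`) bounds
them. For `k ≥ 2` this puts `H` in `(0, 1)`, and `H*` in `(0, 1)` if `f(1) ≥ 2` and in `(1, 2)` if
`f(1) = 1`, i.e. `f = X ^ d`; the bound `2` there is `∏_{u ≥ 2} (1 - 1 / u ^ 2)⁻¹`.
For `k = 1` both sums equal `∑ 1 / f(i) ^ s ∈ (0, 2)`. It exceeds `1` if `f(1) = 1` and `n ≥ 2`,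
and is below `1` otherwise, except for `f = X ^ 2 + 1`, `s = 1`, where the partial sums of
`1 / (i ^ 2 + 1)` jump over `1` between `n = 12` and `n = 13`.
-/

lemma sum_Icc_succ_bot {M : Type*} [AddCommMonoid M] {a b : ℕ} (hab : a ≤ b) (f : ℕ → M) :
    ∑ i ∈ Icc a b, f i = f a + ∑ i ∈ Icc (a + 1) b, f i := by
  rw [← insert_Icc_add_one_left_eq_Icc hab, sum_insert (by simp)]

section ChainSum

variable {α R : Type*} (r : α → α → Prop) [DecidableRel r] (s : Finset α)

def chainSum [CommSemiring R] (k : ℕ) (y : Fin k → α → R) : R :=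
  ∑ x ∈ (Fintype.piFinset fun _ : Fin k => s).filter
      (fun x => ∀ p q : Fin k, p < q → r (x p) (x q)),
    ∏ j, y j (x j)

variable {r s}

lemma chainSum_zero [CommSemiring R] (y : Fin 0 → α → R) : chainSum r s 0 y = 1 := by
  simp [chainSum]

lemma chainSum_succ [CommSemiring R] {k : ℕ} (y : Fin (k + 1) → α → R) :
    chainSum r s (k + 1) y =
      ∑ u ∈ s, y 0 u * chainSum r {v ∈ s | r u v} k (fun j => y j.succ) := by
  simp only [chainSum, mul_sum]
  rw [sum_sigma']
  symm
  refine sum_nbij' (fun p => Fin.cons p.1 p.2) (fun x => ⟨x 0, Fin.tail x⟩) ?_ ?_ ?_ ?_ ?_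
  · rintro ⟨u, x⟩ h
    simp only [mem_sigma, mem_filter, Fintype.mem_piFinset] at h ⊢
    refine ⟨Fin.cases h.1 (fun j => (h.2.1 j).1), ?_⟩
    simpa [Fin.forall_fin_succ] using ⟨fun j => (h.2.1 j).2, h.2.2⟩
  · intro x h
    simp only [mem_sigma, mem_filter, Fintype.mem_piFinset] at h ⊢
    exact ⟨h.1 0, fun j => ⟨h.1 j.succ, h.2 0 j.succ (Fin.succ_pos j)⟩,
      fun p q hpq => h.2 p.succ q.succ (Fin.succ_lt_succ_iff.mpr hpq)⟩
  · rintro ⟨u, x⟩ _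
    simp
  · intro x _
    simp
  · rintro ⟨u, x⟩ _
    simp [Fin.prod_univ_succ]

lemma chainSum_one [CommSemiring R] (y : Fin 1 → α → R) :
    chainSum r s 1 y = ∑ u ∈ s, y 0 u := by
  simp [chainSum_succ, chainSum_zero]

variable [CommSemiring R] [PartialOrder R] {k : ℕ} {y z : Fin k → α → R}

lemma chainSum_nonneg [IsOrderedRing R] (hy : ∀ j, ∀ i ∈ s, 0 ≤ y j i) :
    0 ≤ chainSum r s k y :=
  sum_nonneg fun _ hx => prod_nonneg fun j _ =>
    hy j _ (Fintype.mem_piFinset.mp (mem_filter.mp hx).1 j)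

lemma chainSum_mono [IsOrderedRing R] (hy : ∀ j, ∀ i ∈ s, 0 ≤ y j i)
    (hyz : ∀ j, ∀ i ∈ s, y j i ≤ z j i) : chainSum r s k y ≤ chainSum r s k z :=
  sum_le_sum fun _ hx =>
    have hxs := Fintype.mem_piFinset.mp (mem_filter.mp hx).1
    prod_le_prod (fun j _ => hy j _ (hxs j)) fun j _ => hyz j _ (hxs j)

lemma chainSum_le_chainSum_of_imp [IsOrderedRing R] {r' : α → α → Prop} [DecidableRel r']
    (hrr' : ∀ a b, r a b → r' a b) (hy : ∀ j, ∀ i ∈ s, 0 ≤ y j i) :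
    chainSum r s k y ≤ chainSum r' s k y := by
  refine sum_le_sum_of_subset_of_nonneg ?_ fun x hx _ => ?_
  · intro x
    simp only [mem_filter]
    exact fun ⟨hxs, hx⟩ => ⟨hxs, fun p q hpq => hrr' _ _ (hx p q hpq)⟩
  · exact prod_nonneg fun j _ =>
      hy j _ (Fintype.mem_piFinset.mp (mem_filter.mp hx).1 j)

lemma chainSum_pos [IsStrictOrderedRing R] (hy : ∀ j, ∀ i ∈ s, 0 < y j i) (x : Fin k → α)
    (hxs : ∀ j, x j ∈ s) (hx : ∀ p q, p < q → r (x p) (x q)) : 0 < chainSum r s k y :=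
  sum_pos' (fun _ hx' => prod_nonneg fun j _ =>
      (hy j _ (Fintype.mem_piFinset.mp (mem_filter.mp hx').1 j)).le)
    ⟨x, mem_filter.mpr ⟨Fintype.mem_piFinset.mpr hxs, hx⟩,
      prod_pos fun j _ => hy j _ (hxs j)⟩

end ChainSum

section ChainSumIcc

variable {R : Type*} [CommSemiring R]

lemma chainSum_le_Icc_succ {n t k : ℕ} (y : Fin (k + 1) → ℕ → R) :
    chainSum (· ≤ ·) (Icc t n) (k + 1) y =
      ∑ u ∈ Icc t n, y 0 u * chainSum (· ≤ ·) (Icc u n) k (fun j => y j.succ) := by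
  rw [chainSum_succ]
  refine sum_congr rfl fun u hu => ?_
  congr 2
  ext v
  simp only [mem_filter, mem_Icc] at hu ⊢
  omega

lemma chainSum_lt_Icc_succ {n t k : ℕ} (y : Fin (k + 1) → ℕ → R) :
    chainSum (· < ·) (Icc t n) (k + 1) y =
      ∑ u ∈ Icc t n, y 0 u * chainSum (· < ·) (Icc (u + 1) n) k (fun j => y j.succ) := by
  rw [chainSum_succ]
  refine sum_congr rfl fun u hu => ?_
  congr 2
  ext v
  simp only [mem_filter, mem_Icc] at hu ⊢
  omega

lemma chainSum_le_Icc_le_pow [PartialOrder R] [IsOrderedRing R] {y : ℕ → R}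
    (hy : ∀ u, 0 ≤ y u) {c : R} {t n : ℕ} (hc : ∑ u ∈ Icc t n, y u ≤ c) (k : ℕ) :
    chainSum (· ≤ ·) (Icc t n) k (fun _ => y) ≤ c ^ k := by
  induction k generalizing t with
  | zero => rw [chainSum_zero, pow_zero]
  | succ k ih =>
    have hc0 : 0 ≤ c := (sum_nonneg fun u _ => hy u).trans hc
    rw [chainSum_le_Icc_succ, pow_succ']
    calc ∑ u ∈ Icc t n, y u * chainSum (· ≤ ·) (Icc u n) k (fun _ => y)
        ≤ ∑ u ∈ Icc t n, y u * c ^ k := by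
          refine sum_le_sum fun u hu => mul_le_mul_of_nonneg_left (ih ?_) (hy u)
          refine le_trans (sum_le_sum_of_subset_of_nonneg ?_ fun v _ _ => hy v) hc
          exact Icc_subset_Icc_left (mem_Icc.mp hu).1
      _ ≤ c * c ^ k := by
          rw [← sum_mul]
          exact mul_le_mul_of_nonneg_right hc (pow_nonneg hc0 k)

lemma one_lt_chainSum_le_Icc_one [PartialOrder R] [IsStrictOrderedRing R] {n k : ℕ} (hn : 2 ≤ n) (hk : 1 ≤ k) {y : Fin k → ℕ → R}
    (hy : ∀ j, ∀ i ∈ Icc 1 n, 0 < y j i) (hy1 : ∀ j, y j 1 = 1) :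
    1 < chainSum (· ≤ ·) (Icc 1 n) k y := by
  induction k, hk using Nat.le_induction with
  | base =>
    rw [chainSum_one, sum_Icc_succ_bot (by omega), hy1, lt_add_iff_pos_right]
    exact sum_pos (fun i hi => hy 0 i (by simp at hi ⊢; omega)) ⟨2, by simp; omega⟩
  | succ k hk ih =>
    rw [chainSum_le_Icc_succ]
    refine lt_of_lt_of_le ?_ (single_le_sum (fun u hu => mul_nonneg (hy 0 u hu).le
      (chainSum_nonneg fun j i hi =>
        (hy j.succ i (Icc_subset_Icc_left (mem_Icc.mp hu).1 hi)).le))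
      (mem_Icc.mpr ⟨le_rfl, by omega⟩))
    rw [hy1, one_mul]
    exact ih (fun j i hi => hy j.succ i hi) fun j => hy1 j.succ

end ChainSumIcc

lemma sum_Icc_sub_succ_lt {M : Type*} [AddCommGroup M] [LinearOrder M] [IsOrderedAddMonoid M]
    {g : ℕ → M} {c : M} {t : ℕ} (n : ℕ) (hg : ∀ i, t ≤ i → c < g i) :
    ∑ i ∈ Icc t n, (g i - g (i + 1)) < g t - c := by
  rcases le_or_gt t n with htn | hnt
  · have h := sum_Icc_sub htn (-g)
    simp only [Pi.neg_apply, neg_sub_neg] at h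
    rw [h]
    exact sub_lt_sub_left (hg _ (by omega)) _
  · rw [Icc_eq_empty_of_lt hnt, sum_empty, sub_pos]
    exact hg t le_rfl

lemma sum_Icc_inv_mul_succ_lt {t : ℕ} (ht : 1 ≤ t) (n : ℕ) :
    ∑ u ∈ Icc t n, 1 / ((u : ℚ) * (u + 1)) < 1 / (t : ℚ) := by
  have key := sum_Icc_sub_succ_lt (g := fun u : ℕ => 1 / (u : ℚ)) (c := 0) n fun i hi => by
    have : (1 : ℚ) ≤ i := by exact_mod_cast ht.trans hi
    positivity
  rw [sub_zero] at key
  refine lt_of_eq_of_lt (sum_congr rfl fun u hu => ?_) key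
  have : (1 : ℚ) ≤ u := by exact_mod_cast ht.trans (mem_Icc.mp hu).1
  push_cast
  field_simp
  ring

lemma sum_Icc_inv_sq_lt {t : ℕ} (ht : 1 ≤ t) (n : ℕ) :
    ∑ u ∈ Icc t n, 1 / (u : ℚ) ^ 2 < 2 / (2 * (t : ℚ) - 1) := by
  have key := sum_Icc_sub_succ_lt (g := fun u : ℕ => 2 / (2 * (u : ℚ) - 1)) (c := 0) n
    fun i hi => by
      have : (1 : ℚ) ≤ i := by exact_mod_cast ht.trans hi
      have : (0 : ℚ) < 2 * i - 1 := by linarith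
      positivity
  rw [sub_zero] at key
  refine lt_of_le_of_lt (sum_le_sum fun u hu => ?_) key
  have : (1 : ℚ) ≤ u := by exact_mod_cast ht.trans (mem_Icc.mp hu).1
  -- `2 / (2u - 1) - 2 / (2u + 1) = 1 / (u ^ 2 - 1 / 4)`
  push_cast
  rw [div_sub_div _ _ (by linarith) (by linarith),
    div_le_div_iff₀ (by positivity) (by nlinarith)]
  nlinarith

lemma sum_Icc_inv_sq_le_two_fifths {t : ℕ} (ht : 3 ≤ t) (n : ℕ) :
    ∑ u ∈ Icc t n, 1 / (u : ℚ) ^ 2 ≤ 2 / 5 := by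
  refine le_trans (sum_le_sum_of_subset_of_nonneg (Icc_subset_Icc_left ht)
    fun _ _ _ => by positivity) ((sum_Icc_inv_sq_lt (by norm_num) n).le.trans_eq ?_)
  norm_num

lemma sum_Icc_inv_sq_add_one_ne_one (n : ℕ) :
    ∑ i ∈ Icc 1 n, 1 / ((i : ℚ) ^ 2 + 1) ≠ 1 := by
  have mono {a b : ℕ} (hab : a ≤ b) :
      ∑ i ∈ Icc 1 a, 1 / ((i : ℚ) ^ 2 + 1) ≤ ∑ i ∈ Icc 1 b, 1 / ((i : ℚ) ^ 2 + 1) :=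
    sum_le_sum_of_subset_of_nonneg (Icc_subset_Icc_right hab)
      fun _ _ _ => by positivity
  rcases le_or_gt n 12 with hn | hn
  · have : ∑ i ∈ Icc (1 : ℕ) 12, 1 / ((i : ℚ) ^ 2 + 1) < 1 := by
      norm_num [sum_Icc_succ_top]
    exact ((mono hn).trans_lt this).ne
  · have : 1 < ∑ i ∈ Icc (1 : ℕ) 13, 1 / ((i : ℚ) ^ 2 + 1) := by
      norm_num [sum_Icc_succ_top]
    exact (this.trans_le (mono hn)).ne'

section InverseSquareWeights

variable {n : ℕ}

lemma sum_range_chainSum_le_inv_sq_lt {t : ℕ} (ht : 2 ≤ t) (K : ℕ) :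
    ∑ m ∈ range (K + 1), chainSum (· ≤ ·) (Icc t n) m (fun _ u => 1 / (u : ℚ) ^ 2) <
      (t : ℚ) / (t - 1) := by
  induction K generalizing t with
  | zero =>
    have ht' : (2 : ℚ) ≤ t := by exact_mod_cast ht
    rw [sum_range_one, chainSum_zero, one_lt_div (by linarith)]
    linarith
  | succ K ih =>
    -- the bound `u / (u - 1)` drops by exactly `1 / u ^ 2 * (u / (u - 1))` from `u` to `u + 1`
    have key := sum_Icc_sub_succ_lt (g := fun u : ℕ => (u : ℚ) / (u - 1)) (c := 1) n
      fun i hi => by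
        have : (2 : ℚ) ≤ i := by exact_mod_cast ht.trans hi
        rw [one_lt_div (by linarith)]
        linarith
    rw [sum_range_succ', chainSum_zero]
    simp_rw [chainSum_le_Icc_succ]
    rw [sum_comm]
    simp_rw [← mul_sum]
    have hle : ∑ u ∈ Icc t n, 1 / (u : ℚ) ^ 2 *
          ∑ m ∈ range (K + 1), chainSum (· ≤ ·) (Icc u n) m (fun _ v => 1 / (v : ℚ) ^ 2) ≤
        ∑ u ∈ Icc t n, ((u : ℚ) / (u - 1) - ((u + 1 : ℕ) : ℚ) / ((u + 1 : ℕ) - 1)) := by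
      refine sum_le_sum fun u hu => ?_
      have htu := (mem_Icc.mp hu).1
      have hu' : (2 : ℚ) ≤ u := by exact_mod_cast ht.trans htu
      calc 1 / (u : ℚ) ^ 2 * ∑ m ∈ range (K + 1),
              chainSum (· ≤ ·) (Icc u n) m (fun _ u => 1 / (u : ℚ) ^ 2)
          ≤ 1 / (u : ℚ) ^ 2 * (u / (u - 1)) :=
            mul_le_mul_of_nonneg_left (ih (ht.trans htu)).le (by positivity)
        _ = (u : ℚ) / (u - 1) - ((u + 1 : ℕ) : ℚ) / ((u + 1 : ℕ) - 1) := by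
            have : (u : ℚ) ≠ 0 := by linarith
            have : (u : ℚ) - 1 ≠ 0 := by linarith
            push_cast
            rw [add_sub_cancel_right]
            field_simp
            ring
    linarith

lemma chainSum_le_inv_sq_Icc_one (hn : 1 ≤ n) (k : ℕ) :
    chainSum (· ≤ ·) (Icc 1 n) k (fun _ u => 1 / (u : ℚ) ^ 2) =
      ∑ m ∈ range (k + 1), chainSum (· ≤ ·) (Icc 2 n) m (fun _ u => 1 / (u : ℚ) ^ 2) := by
  induction k with
  | zero => simp [chainSum_zero]
  | succ k ih =>
    rw [sum_range_succ, ← ih, chainSum_le_Icc_succ, chainSum_le_Icc_succ,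
      sum_Icc_succ_bot hn]
    norm_num

lemma chainSum_le_inv_sq_lt_two (hn : 1 ≤ n) (k : ℕ) :
    chainSum (· ≤ ·) (Icc 1 n) k (fun _ u => 1 / (u : ℚ) ^ 2) < 2 := by
  rw [chainSum_le_inv_sq_Icc_one hn]
  exact (sum_range_chainSum_le_inv_sq_lt le_rfl k).trans_eq (by norm_num)

lemma chainSum_lt_inv_sq_lt_one (hn : 1 ≤ n) {k : ℕ} (hk : 2 ≤ k) :
    chainSum (· < ·) (Icc 1 n) k (fun _ u => 1 / (u : ℚ) ^ 2) < 1 := by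
  obtain ⟨m, rfl⟩ : ∃ m, k = m + 1 := ⟨k - 1, by omega⟩
  have strict_le {t : ℕ} {c : ℚ} (hc : ∑ u ∈ Icc t n, 1 / (u : ℚ) ^ 2 ≤ c)
      (hc1 : c ≤ 1) :
      chainSum (· < ·) (Icc t n) m (fun _ u => 1 / (u : ℚ) ^ 2) ≤ c :=
    (chainSum_le_chainSum_of_imp (fun _ _ h => h.le) fun _ _ _ => by positivity).trans
      ((chainSum_le_Icc_le_pow (fun _ => by positivity) hc m).trans
        (pow_le_of_le_one ((sum_nonneg fun _ _ => by positivity).trans hc) hc1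
          (by omega)))
  have head : chainSum (· < ·) (Icc 2 n) m (fun _ u => 1 / (u : ℚ) ^ 2) ≤ 2 / 3 :=
    strict_le ((sum_Icc_inv_sq_lt one_le_two n).le.trans_eq (by norm_num)) (by norm_num)
  have tail : ∑ u ∈ Icc 2 n, 1 / (u : ℚ) ^ 2 *
      chainSum (· < ·) (Icc (u + 1) n) m (fun _ u => 1 / (u : ℚ) ^ 2) ≤ 2 / 3 * (2 / 5) := by
    calc _ ≤ ∑ u ∈ Icc 2 n, 1 / (u : ℚ) ^ 2 * (2 / 5) := by
          refine sum_le_sum fun u hu => mul_le_mul_of_nonneg_left ?_ (by positivity)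
          exact strict_le (sum_Icc_inv_sq_le_two_fifths (by simp at hu; omega) n) (by norm_num)
      _ ≤ 2 / 3 * (2 / 5) := by
          rw [← sum_mul]
          refine mul_le_mul_of_nonneg_right ((sum_Icc_inv_sq_lt one_le_two n).le.trans_eq ?_)
            (by norm_num)
          norm_num
  rw [chainSum_lt_Icc_succ, sum_Icc_succ_bot hn]
  norm_num at head tail ⊢
  linarith

lemma chainSum_le_inv_sq_add_one_lt_one (hn : 2 ≤ n) {k : ℕ} (hk : 2 ≤ k) :
    chainSum (· ≤ ·) (Icc 1 n) k (fun _ u => 1 / ((u : ℚ) ^ 2 + 1)) < 1 := by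
  obtain ⟨a, ha⟩ : ∃ a : ℕ → ℚ,
      ∀ k, chainSum (· ≤ ·) (Icc 1 n) k (fun _ u => 1 / ((u : ℚ) ^ 2 + 1)) = a k :=
    ⟨_, fun _ => rfl⟩
  have hc : ∑ u ∈ Icc 2 n, 1 / ((u : ℚ) ^ 2 + 1) ≤ 3 / 5 := by
    have h3 : ∑ u ∈ Icc 3 n, 1 / ((u : ℚ) ^ 2 + 1) ≤ 2 / 5 := by
      refine le_trans (sum_le_sum fun u hu => ?_) (sum_Icc_inv_sq_le_two_fifths le_rfl n)
      have : (0 : ℚ) < u := by simp at hu; exact_mod_cast (by omega : 0 < u)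
      exact one_div_le_one_div_of_le (by positivity) (by linarith)
    rw [sum_Icc_succ_bot hn]
    norm_num at h3 ⊢
    linarith
  have step (k : ℕ) : a (k + 1) ≤ a k / 2 + (3 / 5) ^ (k + 1) := by
    have tail := chainSum_le_Icc_le_pow (fun u => by positivity) hc (k + 1)
    rw [chainSum_le_Icc_succ] at tail
    rw [← ha, ← ha, chainSum_le_Icc_succ, sum_Icc_succ_bot (by omega)]
    norm_num at tail ⊢
    linarith
  have a0 : a 0 = 1 := by rw [← ha, chainSum_zero]
  rw [ha]
  induction k, hk using Nat.le_induction with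
  | base => linarith [step 0, step 1]
  | succ k hk ih =>
    have : (3 / 5 : ℚ) ^ (k + 1) ≤ (3 / 5) ^ 3 :=
      pow_le_pow_of_le_one (by norm_num) (by norm_num) (by omega)
    linarith [step k]

end InverseSquareWeights

section NonnegCoeffs

variable {f : ℤ[X]}

lemma one_le_leadingCoeff_of_nonneg (hf0 : f ≠ 0) (hcoeff : ∀ i, 0 ≤ f.coeff i) :
    1 ≤ f.leadingCoeff := by
  have := hcoeff f.natDegree
  have := leadingCoeff_ne_zero.mpr hf0
  rw [leadingCoeff] at *
  omega

lemma one_le_eval_one_of_nonneg (hf0 : f ≠ 0) (hcoeff : ∀ i, 0 ≤ f.coeff i) :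
    1 ≤ f.eval 1 := by
  rw [eval_eq_sum_range]
  simp only [one_pow, mul_one]
  exact (one_le_leadingCoeff_of_nonneg hf0 hcoeff).trans
    (single_le_sum (fun i _ => hcoeff i) (self_mem_range_succ _))

lemma eval_one_add_pow_le_of_nonneg (hf0 : f ≠ 0) (hcoeff : ∀ i, 0 ≤ f.coeff i) {x : ℤ}
    (hx : 1 ≤ x) : f.eval 1 + x ^ f.natDegree ≤ f.eval x + 1 := by
  rw [eval_eq_sum_range, eval_eq_sum_range, sum_range_succ, sum_range_succ]
  have hlow : ∑ j ∈ range f.natDegree, f.coeff j * 1 ^ j ≤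
      ∑ j ∈ range f.natDegree, f.coeff j * x ^ j :=
    sum_le_sum fun j _ =>
      mul_le_mul_of_nonneg_left (pow_le_pow_left₀ zero_le_one hx j) (hcoeff j)
  have hlead := one_le_leadingCoeff_of_nonneg hf0 hcoeff
  have hpow : 1 ≤ x ^ f.natDegree := one_le_pow₀ hx
  rw [leadingCoeff] at hlead
  rw [one_pow, mul_one]
  nlinarith

lemma eq_X_pow_of_eval_one_eq_one (hf0 : f ≠ 0) (hcoeff : ∀ i, 0 ≤ f.coeff i)
    (h1 : f.eval 1 = 1) : f = X ^ f.natDegree := by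
  have hsum := eval_eq_sum_range (p := f) 1
  simp only [one_pow, mul_one, h1, sum_range_succ] at hsum
  have hlead := one_le_leadingCoeff_of_nonneg hf0 hcoeff
  rw [leadingCoeff] at hlead
  have hlow := sum_nonneg fun j (_ : j ∈ range f.natDegree) => hcoeff j
  have hzero := (sum_eq_zero_iff_of_nonneg fun j _ => hcoeff j).mp
    (by omega : ∑ j ∈ range f.natDegree, f.coeff j = 0)
  ext j
  rw [coeff_X_pow]
  rcases lt_trichotomy j f.natDegree with h | rfl | h
  · rw [hzero j (mem_range.mpr h), if_neg h.ne]
  · rw [if_pos rfl]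
    omega
  · rw [coeff_eq_zero_of_natDegree_lt h, if_neg h.ne']

lemma mul_add_one_le_eval_or_eval_eq_sq_add_one (hf0 : f ≠ 0) (hcoeff : ∀ i, 0 ≤ f.coeff i)
    (hd : 2 ≤ f.natDegree) (h2 : f.eval 1 = 2) :
    (∀ x : ℤ, 1 ≤ x → x * (x + 1) ≤ f.eval x) ∨ ∀ x : ℤ, f.eval x = x ^ 2 + 1 := by
  rcases hd.lt_or_eq with hd3 | hd2
  · left
    intro x hx
    have := eval_one_add_pow_le_of_nonneg hf0 hcoeff hx
    have : x ^ 3 ≤ x ^ f.natDegree := pow_le_pow_right₀ hx hd3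
    have : x * (x + 1) ≤ x ^ 3 + 1 := by
      nlinarith [mul_nonneg (sq_nonneg (x - 1)) (by linarith : 0 ≤ x + 1)]
    linarith
  · have hquad (x : ℤ) : f.eval x = f.coeff 0 + f.coeff 1 * x + f.coeff 2 * x ^ 2 := by
      rw [eval_eq_sum_range, ← hd2]
      simp [sum_range_succ]
    have hlead := one_le_leadingCoeff_of_nonneg hf0 hcoeff
    rw [leadingCoeff, ← hd2] at hlead
    have hsum := hquad 1
    have := hcoeff 0
    have := hcoeff 1
    rw [h2] at hsum
    by_cases hc0 : f.coeff 0 = 0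
    · left
      intro x hx
      rw [hquad, hc0, show f.coeff 1 = 2 - f.coeff 2 by omega]
      nlinarith [mul_nonneg (sub_nonneg.mpr hlead) (by nlinarith : 0 ≤ x ^ 2 - x)]
    · right
      intro x
      rw [hquad, show f.coeff 0 = 1 by omega, show f.coeff 1 = 0 by omega,
        show f.coeff 2 = 1 by omega]
      ring

end NonnegCoeffs

def recipPow (f : ℤ[X]) (m i : ℕ) : ℚ := 1 / ((f.eval (i : ℤ) : ℤ) : ℚ) ^ m

lemma Hsum_eq_chainSum (f : ℤ[X]) (k n : ℕ) (s : Fin k → ℕ) :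
    Hsum f k n s = chainSum (· < ·) (Icc 1 n) k fun j => recipPow f (s j) :=
  rfl

lemma HsumStar_eq_chainSum (f : ℤ[X]) (k n : ℕ) (s : Fin k → ℕ) :
    HsumStar f k n s = chainSum (· ≤ ·) (Icc 1 n) k fun j => recipPow f (s j) := by
  refine sum_congr (filter_congr fun x _ => ⟨fun h p q hpq => h p q hpq.le, ?_⟩)
    fun _ _ => rfl
  intro h p q hpq
  rcases hpq.lt_or_eq with hpq | rfl
  exacts [h p q hpq, le_rfl]

section RecipPow

variable {f : ℤ[X]} {m : ℕ}

lemma pow_natDegree_le_eval (hf0 : f ≠ 0) (hcoeff : ∀ i, 0 ≤ f.coeff i) {i : ℕ}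
    (hi : 1 ≤ i) : (i : ℚ) ^ f.natDegree ≤ ((f.eval (i : ℤ) : ℤ) : ℚ) := by
  have := eval_one_add_pow_le_of_nonneg hf0 hcoeff (x := i) (by exact_mod_cast hi)
  have := one_le_eval_one_of_nonneg hf0 hcoeff
  exact_mod_cast (by linarith : (i : ℤ) ^ f.natDegree ≤ f.eval (i : ℤ))

lemma recipPow_pos (hf0 : f ≠ 0) (hcoeff : ∀ i, 0 ≤ f.coeff i) (m : ℕ) {i : ℕ}
    (hi : 1 ≤ i) : 0 < recipPow f m i := by
  have : (0 : ℚ) < i := by exact_mod_cast hi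
  have := (pow_pos this f.natDegree).trans_le (pow_natDegree_le_eval hf0 hcoeff hi)
  unfold recipPow
  positivity

lemma recipPow_le_inv_sq (hf0 : f ≠ 0) (hcoeff : ∀ i, 0 ≤ f.coeff i)
    (hdm : 2 ≤ f.natDegree * m) {i : ℕ} (hi : 1 ≤ i) :
    recipPow f m i ≤ 1 / (i : ℚ) ^ 2 := by
  have hi' : (1 : ℚ) ≤ i := by exact_mod_cast hi
  refine one_div_le_one_div_of_le (by positivity) ?_
  calc (i : ℚ) ^ 2 ≤ (i : ℚ) ^ (f.natDegree * m) := pow_le_pow_right₀ hi' hdm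
    _ = ((i : ℚ) ^ f.natDegree) ^ m := pow_mul _ _ _
    _ ≤ _ := pow_le_pow_left₀ (by positivity) (pow_natDegree_le_eval hf0 hcoeff hi) m

lemma recipPow_le_inv_sq_add_one (hf0 : f ≠ 0) (hcoeff : ∀ i, 0 ≤ f.coeff i)
    (h2 : 2 ≤ f.eval 1) (hm : 1 ≤ m) (hdm : 2 ≤ f.natDegree * m) {i : ℕ} (hi : 1 ≤ i) :
    recipPow f m i ≤ 1 / ((i : ℚ) ^ 2 + 1) := by
  have hi' : (1 : ℚ) ≤ i := by exact_mod_cast hi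
  have hev : (i : ℚ) ^ f.natDegree + 1 ≤ ((f.eval (i : ℤ) : ℤ) : ℚ) := by
    have := eval_one_add_pow_le_of_nonneg hf0 hcoeff (x := i) (by exact_mod_cast hi)
    exact_mod_cast (by linarith : (i : ℤ) ^ f.natDegree + 1 ≤ f.eval (i : ℤ))
  refine one_div_le_one_div_of_le (by positivity) ?_
  calc (i : ℚ) ^ 2 + 1 ≤ ((i : ℚ) ^ f.natDegree) ^ m + 1 ^ m := by
        rw [one_pow, ← pow_mul]
        gcongr
    _ ≤ ((i : ℚ) ^ f.natDegree + 1) ^ m := pow_add_pow_le (by positivity) zero_le_one (by omega)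
    _ ≤ _ := pow_le_pow_left₀ (by positivity) hev m

lemma recipPow_one_of_eval_one_eq_one (h1 : f.eval 1 = 1) : recipPow f m 1 = 1 := by
  simp [recipPow, h1]

end RecipPow

lemma not_exists_int_eq_of_pos_of_lt_two {x : ℚ} (h0 : 0 < x) (h2 : x < 2) (h1 : x ≠ 1) :
    ¬∃ z : ℤ, x = z := by
  rintro ⟨z, rfl⟩
  have : (0 : ℤ) < z := by exact_mod_cast h0
  have : z < 2 := by exact_mod_cast h2
  exact h1 (by norm_cast; omega)

section Sums

variable {f : ℤ[X]} {k n m : ℕ} {s : Fin k → ℕ}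

lemma Hsum_pos (hf0 : f ≠ 0) (hcoeff : ∀ i, 0 ≤ f.coeff i) (hkn : k ≤ n) :
    0 < Hsum f k n s :=
  chainSum_pos (fun j _ hi => recipPow_pos hf0 hcoeff _ (mem_Icc.mp hi).1)
    (fun p => p + 1) (fun p => mem_Icc.mpr ⟨by omega, by omega⟩)
    fun _ _ hpq => Nat.succ_lt_succ hpq

lemma Hsum_lt_one (hf0 : f ≠ 0) (hcoeff : ∀ i, 0 ≤ f.coeff i)
    (hds : ∀ j, 2 ≤ f.natDegree * s j) (hk : 2 ≤ k) (hn : 1 ≤ n) : Hsum f k n s < 1 :=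
  (chainSum_mono (fun _ _ hi => (recipPow_pos hf0 hcoeff _ (mem_Icc.mp hi).1).le)
    fun j _ hi => recipPow_le_inv_sq hf0 hcoeff (hds j) (mem_Icc.mp hi).1).trans_lt
    (chainSum_lt_inv_sq_lt_one hn hk)

lemma HsumStar_pos (hf0 : f ≠ 0) (hcoeff : ∀ i, 0 ≤ f.coeff i) (hn : 1 ≤ n) :
    0 < HsumStar f k n s := by
  rw [HsumStar_eq_chainSum]
  exact chainSum_pos (fun j _ hi => recipPow_pos hf0 hcoeff _ (mem_Icc.mp hi).1)
    (fun _ => 1) (fun _ => mem_Icc.mpr ⟨le_rfl, hn⟩) fun _ _ _ => le_rfl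

lemma HsumStar_lt_two (hf0 : f ≠ 0) (hcoeff : ∀ i, 0 ≤ f.coeff i)
    (hds : ∀ j, 2 ≤ f.natDegree * s j) (hn : 1 ≤ n) : HsumStar f k n s < 2 := by
  rw [HsumStar_eq_chainSum]
  exact (chainSum_mono (fun _ _ hi => (recipPow_pos hf0 hcoeff _ (mem_Icc.mp hi).1).le)
    fun j _ hi => recipPow_le_inv_sq hf0 hcoeff (hds j) (mem_Icc.mp hi).1).trans_lt
    (chainSum_le_inv_sq_lt_two hn k)

lemma one_lt_HsumStar (hf0 : f ≠ 0) (hcoeff : ∀ i, 0 ≤ f.coeff i) (h1 : f.eval 1 = 1)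
    (hn : 2 ≤ n) (hk : 1 ≤ k) : 1 < HsumStar f k n s := by
  rw [HsumStar_eq_chainSum]
  exact one_lt_chainSum_le_Icc_one hn hk
    (fun _ _ hi => recipPow_pos hf0 hcoeff _ (mem_Icc.mp hi).1)
    fun _ => recipPow_one_of_eval_one_eq_one h1

lemma HsumStar_lt_one (hf0 : f ≠ 0) (hcoeff : ∀ i, 0 ≤ f.coeff i) (h2 : 2 ≤ f.eval 1)
    (hs : ∀ j, 1 ≤ s j) (hds : ∀ j, 2 ≤ f.natDegree * s j) (hn : 2 ≤ n) (hk : 2 ≤ k) :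
    HsumStar f k n s < 1 := by
  rw [HsumStar_eq_chainSum]
  exact (chainSum_mono (fun _ _ hi => (recipPow_pos hf0 hcoeff _ (mem_Icc.mp hi).1).le)
    fun j _ hi => recipPow_le_inv_sq_add_one hf0 hcoeff h2 (hs j) (hds j)
      (mem_Icc.mp hi).1).trans_lt (chainSum_le_inv_sq_add_one_lt_one hn hk)

lemma sum_recipPow_Icc_two_lt (hf0 : f ≠ 0) (hcoeff : ∀ i, 0 ≤ f.coeff i)
    (hdm : 2 ≤ f.natDegree * m) : ∑ i ∈ Icc 2 n, recipPow f m i < 2 / 3 :=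
  (sum_le_sum fun i hi => recipPow_le_inv_sq hf0 hcoeff hdm
    (one_le_two.trans (mem_Icc.mp hi).1)).trans_lt
    ((sum_Icc_inv_sq_lt one_le_two n).trans_eq (by norm_num))

lemma sum_recipPow_lt_two (hf0 : f ≠ 0) (hcoeff : ∀ i, 0 ≤ f.coeff i)
    (hdm : 2 ≤ f.natDegree * m) (hn : 1 ≤ n) : ∑ i ∈ Icc 1 n, recipPow f m i < 2 := by
  rw [sum_Icc_succ_bot hn]
  have := recipPow_le_inv_sq hf0 hcoeff hdm le_rfl
  have := sum_recipPow_Icc_two_lt (n := n) hf0 hcoeff hdm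
  norm_num at *
  linarith

lemma sum_recipPow_ne_one (hf0 : f ≠ 0) (hcoeff : ∀ i, 0 ≤ f.coeff i) (hm : 1 ≤ m)
    (hdm : 2 ≤ f.natDegree * m) (hn : 1 ≤ n) (hexc : ¬(f.eval 1 = 1 ∧ n = 1)) :
    ∑ i ∈ Icc 1 n, recipPow f m i ≠ 1 := by
  have htail := sum_recipPow_Icc_two_lt (n := n) hf0 hcoeff hdm
  rw [sum_Icc_succ_bot hn]
  by_cases h1 : f.eval 1 = 1
  · have hn2 : 2 ≤ n := by omega
    rw [recipPow_one_of_eval_one_eq_one h1]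
    refine (lt_add_of_pos_right _ (sum_pos (fun i hi => ?_) ⟨2, by simp; omega⟩)).ne'
    exact recipPow_pos hf0 hcoeff _ (one_le_two.trans (mem_Icc.mp hi).1)
  have h2 : 2 ≤ f.eval 1 := by have := one_le_eval_one_of_nonneg hf0 hcoeff; omega
  by_cases h3 : 3 ≤ f.eval 1 ^ m
  · have : recipPow f m 1 ≤ 1 / 3 := by
      unfold recipPow
      refine one_div_le_one_div_of_le (by norm_num) ?_
      exact_mod_cast h3
    exact (by linarith : recipPow f m 1 + ∑ i ∈ Icc 2 n, recipPow f m i < 1).ne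
  -- otherwise `f(1) ^ m = 2`, so `m = 1` and `f(1) = 2`
  have hm1 : m = 1 := by
    by_contra hm1
    have : f.eval 1 ^ 2 ≤ f.eval 1 ^ m := pow_le_pow_right₀ (by omega) (by omega)
    nlinarith
  subst hm1
  rw [← sum_Icc_succ_bot hn]
  rcases mul_add_one_le_eval_or_eval_eq_sq_add_one hf0 hcoeff (by omega)
    (by rw [pow_one] at h3; omega) with hge | hsq
  · refine (((sum_le_sum fun i hi => ?_).trans_lt
      (sum_Icc_inv_mul_succ_lt le_rfl n)).trans_eq (by norm_num)).ne
    have hi : (1 : ℚ) ≤ i := by exact_mod_cast (mem_Icc.mp hi).1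
    have := hge i (by exact_mod_cast hi)
    unfold recipPow
    rw [pow_one]
    exact one_div_le_one_div_of_le (by positivity) (by exact_mod_cast this)
  · convert sum_Icc_inv_sq_add_one_ne_one n using 2 with i
    simp [recipPow, hsq]

lemma not_exists_int_eq_sum_recipPow (hf0 : f ≠ 0) (hcoeff : ∀ i, 0 ≤ f.coeff i)
    (hm : 1 ≤ m) (hdm : 2 ≤ f.natDegree * m) (hn : 1 ≤ n) (hexc : ¬(f.eval 1 = 1 ∧ n = 1)) :
    ¬∃ z : ℤ, ∑ i ∈ Icc 1 n, recipPow f m i = z :=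
  not_exists_int_eq_of_pos_of_lt_two
    (sum_pos (fun i hi => recipPow_pos hf0 hcoeff m (mem_Icc.mp hi).1) ⟨1, by simp; omega⟩)
    (sum_recipPow_lt_two hf0 hcoeff hdm hn) (sum_recipPow_ne_one hf0 hcoeff hm hdm hn hexc)

lemma not_exists_int_eq_Hsum (hf0 : f ≠ 0) (hcoeff : ∀ i, 0 ≤ f.coeff i)
    (hds : ∀ j, 2 ≤ f.natDegree * s j) (hk : 2 ≤ k) (hkn : k ≤ n) :
    ¬∃ z : ℤ, Hsum f k n s = z :=
  have hH : Hsum f k n s < 1 := Hsum_lt_one hf0 hcoeff hds hk (by omega)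
  not_exists_int_eq_of_pos_of_lt_two (Hsum_pos hf0 hcoeff hkn) (hH.trans one_lt_two) hH.ne

lemma not_exists_int_eq_HsumStar (hf0 : f ≠ 0) (hcoeff : ∀ i, 0 ≤ f.coeff i)
    (hs : ∀ j, 1 ≤ s j) (hds : ∀ j, 2 ≤ f.natDegree * s j) (hk : 2 ≤ k) (hkn : k ≤ n) :
    ¬∃ z : ℤ, HsumStar f k n s = z := by
  by_cases h1 : f.eval 1 = 1
  · have hH : 1 < HsumStar f k n s := one_lt_HsumStar hf0 hcoeff h1 (by omega) (by omega)
    exact not_exists_int_eq_of_pos_of_lt_two (zero_lt_one.trans hH)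
      (HsumStar_lt_two hf0 hcoeff hds (by omega)) hH.ne'
  · have h2 : 2 ≤ f.eval 1 := by have := one_le_eval_one_of_nonneg hf0 hcoeff; omega
    have hH : HsumStar f k n s < 1 := HsumStar_lt_one hf0 hcoeff h2 hs hds (by omega) hk
    exact not_exists_int_eq_of_pos_of_lt_two (HsumStar_pos hf0 hcoeff (by omega))
      (hH.trans one_lt_two) hH.ne

end Sums

theorem stmt15 (f : Polynomial ℤ) (hf0 : f ≠ 0) (hcoeff : ∀ i, 0 ≤ f.coeff i)
    (k n : ℕ) (hk : 1 ≤ k) (hkn : k ≤ n) (s : Fin k → ℕ) (hs : ∀ j, 1 ≤ s j)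
    (hdeg : 2 ≤ f.natDegree ∨ (f.natDegree = 1 ∧ ∀ j, 2 ≤ s j)) :
    (((∃ m : ℕ, 1 ≤ m ∧ f = Polynomial.X ^ m) ∧ n = 1 ∧ k = 1) →
        Hsum f k n s = 1 ∧ HsumStar f k n s = 1) ∧
    (¬ ((∃ m : ℕ, 1 ≤ m ∧ f = Polynomial.X ^ m) ∧ n = 1 ∧ k = 1) →
        (¬ ∃ z : ℤ, Hsum f k n s = (z : ℚ)) ∧ ¬ ∃ z : ℤ, HsumStar f k n s = (z : ℚ)) := by
  have hd1 : 1 ≤ f.natDegree := by rcases hdeg with hd | ⟨hd, -⟩ <;> omega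
  have hds (j : Fin k) : 2 ≤ f.natDegree * s j := by
    rcases hdeg with hd | ⟨hd, hs2⟩
    · nlinarith [hs j]
    · rw [hd, one_mul]
      exact hs2 j
  refine ⟨?_, fun hexc => ?_⟩
  · rintro ⟨⟨m, -, rfl⟩, rfl, rfl⟩
    rw [Hsum_eq_chainSum, HsumStar_eq_chainSum, chainSum_one, chainSum_one]
    simp [recipPow]
  obtain rfl | hk2 : k = 1 ∨ 2 ≤ k := by omega
  · have h := not_exists_int_eq_sum_recipPow hf0 hcoeff (hs 0) (hds 0) hkn fun ⟨h1, hn⟩ =>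
      hexc ⟨⟨_, hd1, eq_X_pow_of_eval_one_eq_one hf0 hcoeff h1⟩, hn, rfl⟩
    rw [Hsum_eq_chainSum, HsumStar_eq_chainSum, chainSum_one, chainSum_one]
    exact ⟨h, h⟩
  exact ⟨not_exists_int_eq_Hsum hf0 hcoeff hds hk2 hkn,
    not_exists_int_eq_HsumStar hf0 hcoeff hs hds hk2 hkn⟩
end

section
/- Let k, n be positive integers with 1 ≤ k ≤ n, let f(x) = 2x − 1, and let s⃗ = (s₁,…,s_k) be a k-tuple of positive integers. If n ≥ 2, then H*_{k,f}(s⃗,n) := ∑_{1 ≤ i₁ ≤ ⋯ ≤ i_k ≤ n} ∏_{j=1}^k 1/(2i_j−1)^{s_j} is not an integer; if n = 1 then H*_{k,f}(s⃗,1) = 1. -/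
open Finset

/-- `H*_{k,f}(s⃗,n) = ∑_{1 ≤ i₁ ≤ ⋯ ≤ i_k ≤ n} ∏_j 1/(2 i_j − 1)^{s_j}` for `f(x) = 2x − 1`. -/
noncomputable def HoddStar (k n : ℕ) (s : Fin k → ℕ) : ℚ :=
  ∑ i ∈ (Fintype.piFinset fun _ : Fin k => Finset.Icc 1 n).filter
      (fun i => ∀ p q : Fin k, p ≤ q → i p ≤ i q),
    ∏ j : Fin k, (1 : ℚ) / (2 * ((i j : ℕ) : ℚ) - 1) ^ (s j)

theorem stmt16 (k n : ℕ) (hk : 1 ≤ k) (hkn : k ≤ n) (s : Fin k → ℕ) (hs : ∀ j, 1 ≤ s j) :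
    (2 ≤ n → ¬ ∃ z : ℤ, HoddStar k n s = (z : ℚ)) ∧
    (n = 1 → HoddStar k n s = 1) := by
  constructor
  · rintro hn ⟨z, hz⟩
    obtain ⟨p, hp, hnp, hp2n⟩ := Nat.exists_prime_lt_and_le_two_mul n (by omega)
    have hp2 : p ≠ 2 := by omega
    obtain ⟨t, ht⟩ := hp.odd_of_ne_two hp2
    set m : ℕ := t + 1 with hm
    have hpm : 2 * m - 1 = p := by omega
    have hmn : m ∈ Finset.Icc 1 n := by
      simp only [Finset.mem_Icc]
      -- p ≤ 2n and p odd hence p ≤ 2n - 1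
      constructor
      · omega
      · rcases Nat.lt_or_ge m n with h | h
        · omega
        · -- if m > n then p = 2m-1 ≥ 2n+1 > 2n, contradiction
          omega
    set T := (Fintype.piFinset fun _ : Fin k => Finset.Icc 1 n).filter
      (fun i => ∀ p q : Fin k, p ≤ q → i p ≤ i q) with hT
    set c : Fin k → ℕ := fun _ => m with hcdef
    have hcT : c ∈ T := by
      simp only [hT, Finset.mem_filter, Fintype.mem_piFinset]
      exact ⟨fun _ => hmn, fun _ _ _ => le_rfl⟩
    set A : ℕ := ∑ j, s j with hA
    have hA1 : 1 ≤ A := le_trans (hs ⟨0, hk⟩)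
      (Finset.single_le_sum (f := s) (fun _ _ => Nat.zero_le _) (Finset.mem_univ _))
    set P : ℕ := ∏ o ∈ (Finset.Icc 1 n).erase m, (2 * o - 1) with hP
    have hpP : ¬ (p ∣ P) := by
      intro hdvd
      obtain ⟨o, ho, hpo⟩ := hp.prime.exists_mem_finset_dvd hdvd
      have ho' := Finset.mem_of_mem_erase ho
      have hom : o ≠ m := Finset.ne_of_mem_erase ho
      rw [Finset.mem_Icc] at ho'
      obtain ⟨d, hd⟩ := hpo
      -- 2*o-1 < 2*p, so d ≤ 1; 2*o-1 ≥ 1 so d = 1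
      have h1 : 1 ≤ 2 * o - 1 := by omega
      have h2 : 2 * o - 1 < 2 * p := by omega
      have hd1 : d = 1 := by
        rcases Nat.lt_or_ge d 2 with h | h
        · interval_cases d <;> omega
        · exfalso; have : 2 * p ≤ p * d := by
            calc 2 * p = p * 2 := by ring
            _ ≤ p * d := Nat.mul_le_mul_left p h
          omega
      rw [hd1, mul_one] at hd
      omega
    have hPpos : 0 < P := by
      apply Finset.prod_pos
      intro o ho
      have := (Finset.mem_Icc.mp (Finset.mem_of_mem_erase ho)).1
      omega
    -- each term of the scaled sum over T.erase c is an integer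
    have key : ∀ i ∈ T.erase c, ∃ w : ℤ,
        ((P ^ A : ℕ) : ℚ) * (p : ℚ) ^ (A - 1) *
          ∏ j : Fin k, (1 : ℚ) / (2 * ((i j : ℕ) : ℚ) - 1) ^ (s j) = (w : ℚ) := by
      intro i hi
      have hic : i ≠ c := Finset.ne_of_mem_erase hi
      have hiT : i ∈ T := Finset.mem_of_mem_erase hi
      have hiIcc : ∀ j, i j ∈ Finset.Icc 1 n := by
        have := (Finset.mem_filter.mp hiT).1
        rwa [Fintype.mem_piFinset] at this
      have hipos : ∀ j, 1 ≤ i j := fun j => (Finset.mem_Icc.mp (hiIcc j)).1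
      set J : Finset (Fin k) := Finset.univ.filter (fun j => i j = m) with hJ
      set B : ℕ := ∑ j ∈ J, s j with hB
      set C : ℕ := ∏ j ∈ Finset.univ.filter (fun j => ¬ (i j = m)), (2 * i j - 1) ^ (s j)
        with hC
      -- denominator factorization
      have hden : (∏ j : Fin k, (2 * i j - 1) ^ (s j)) = p ^ B * C := by
        rw [← Finset.prod_filter_mul_prod_filter_not Finset.univ (fun j => i j = m)]
        congr 1
        rw [hB, ← Finset.prod_pow_eq_pow_sum]
        apply Finset.prod_congr rfl
        intro j hj
        rw [Finset.mem_filter] at hj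
        rw [hj.2, hpm]
      -- C divides P ^ A
      have hCP : C ∣ P ^ A := by
        have h1 : C ∣ ∏ j ∈ Finset.univ.filter (fun j => ¬ (i j = m)), P ^ (s j) := by
          apply Finset.prod_dvd_prod_of_dvd
          intro j hj
          rw [Finset.mem_filter] at hj
          apply pow_dvd_pow_of_dvd
          exact Finset.dvd_prod_of_mem _ (Finset.mem_erase.mpr ⟨hj.2, hiIcc j⟩)
        rw [Finset.prod_pow_eq_pow_sum] at h1
        exact h1.trans (pow_dvd_pow P (by
          rw [hA, ← Finset.sum_filter_add_sum_filter_not Finset.univ (fun j => i j = m)]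
          omega))
      -- B ≤ A - 1
      have hBA : B + 1 ≤ A := by
        obtain ⟨j0, hj0⟩ : ∃ j0, i j0 ≠ m := by
          by_contra h
          push_neg at h
          exact hic (funext h)
        have hj0' : j0 ∈ Finset.univ.filter (fun j => ¬ (i j = m)) := by
          simp [hj0]
        have h1 : s j0 ≤ ∑ j ∈ Finset.univ.filter (fun j => ¬ (i j = m)), s j :=
          Finset.single_le_sum (fun _ _ => Nat.zero_le _) hj0'
        have h2 : B + ∑ j ∈ Finset.univ.filter (fun j => ¬ (i j = m)), s j = A := by
          rw [hB, hA, Finset.sum_filter_add_sum_filter_not]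
        have := hs j0
        omega
      obtain ⟨E, hE⟩ := hCP
      refine ⟨(E : ℤ) * (p : ℤ) ^ (A - 1 - B), ?_⟩
      -- rewrite the product of rationals as 1 / (nat denominator)
      have hprod : (∏ j : Fin k, (1 : ℚ) / (2 * ((i j : ℕ) : ℚ) - 1) ^ (s j))
          = 1 / (((∏ j : Fin k, (2 * i j - 1) ^ (s j) : ℕ)) : ℚ) := by
        rw [Nat.cast_prod, one_div, ← Finset.prod_inv_distrib]
        apply Finset.prod_congr rfl
        intro j _
        rw [one_div, Nat.cast_pow]
        congr 3
        have := hipos j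
        push_cast [Nat.cast_sub (by omega : 1 ≤ 2 * i j)]
        ring
      rw [hprod, hden, hE]
      have hppos : (0:ℚ) < (p:ℚ) := by exact_mod_cast hp.pos
      have hCpos : 0 < C := by
        apply Finset.prod_pos
        intro j hj
        have h1 := hipos j
        have h2 : 0 < 2 * i j - 1 := by omega
        exact pow_pos h2 _
      have hne : ((p ^ B * C : ℕ) : ℚ) ≠ 0 :=
        Nat.cast_ne_zero.mpr (Nat.mul_ne_zero (pow_ne_zero _ hp.pos.ne') hCpos.ne')
      rw [mul_one_div, div_eq_iff hne]
      push_cast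
      have hexp : A - 1 = (A - 1 - B) + B := by omega
      rw [hexp]
      have hexp2 : A - 1 - B + B - B = A - 1 - B := by omega
      rw [hexp2]
      ring
    -- the special term
    have hcterm : (∏ j : Fin k, (1 : ℚ) / (2 * ((c j : ℕ) : ℚ) - 1) ^ (s j))
        = 1 / (p : ℚ) ^ A := by
      have hcast : (2 * ((m : ℕ) : ℚ) - 1) = (p : ℚ) := by
        have : ((2 * m - 1 : ℕ) : ℚ) = 2 * ((m : ℕ) : ℚ) - 1 := by
          push_cast [Nat.cast_sub (by omega : 1 ≤ 2 * m)]
          ring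
        rw [← this, hpm]
      simp only [hcdef, hcast]
      rw [hA, ← Finset.prod_pow_eq_pow_sum, one_div, ← Finset.prod_inv_distrib]
      simp [one_div]
    -- assemble
    set M : ℚ := ((P ^ A : ℕ) : ℚ) * (p : ℚ) ^ (A - 1) with hM
    have hsum : M * HoddStar k n s
        = M * (1 / (p : ℚ) ^ A) + ∑ i ∈ T.erase c, M *
            ∏ j : Fin k, (1 : ℚ) / (2 * ((i j : ℕ) : ℚ) - 1) ^ (s j) := by
      rw [HoddStar, ← hT, Finset.mul_sum, ← Finset.add_sum_erase T _ hcT, hcterm]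
    -- the subring of integers in ℚ
    have hmem : M * (1 / (p : ℚ) ^ A) ∈ (Int.castRingHom ℚ).range := by
      have h1 : M * HoddStar k n s ∈ (Int.castRingHom ℚ).range := by
        rw [hz]
        refine ⟨(P ^ A : ℤ) * (p : ℤ) ^ (A - 1) * z, ?_⟩
        simp only [Int.coe_castRingHom]
        push_cast [hM]
        ring
      have h2 : (∑ i ∈ T.erase c, M *
          ∏ j : Fin k, (1 : ℚ) / (2 * ((i j : ℕ) : ℚ) - 1) ^ (s j))
          ∈ (Int.castRingHom ℚ).range := by
        apply Subring.sum_mem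
        intro i hi
        obtain ⟨w, hw⟩ := key i hi
        exact ⟨w, hw.symm⟩
      have := Subring.sub_mem _ h1 h2
      rw [hsum, add_sub_cancel_right] at this
      exact this
    obtain ⟨w, hw⟩ := hmem
    -- M / p^A = P^A / p, so P^A = w * p
    have hppos : (0:ℚ) < (p:ℚ) := by exact_mod_cast hp.pos
    have hpA : (p : ℚ) ^ A = (p : ℚ) ^ (A - 1) * (p : ℚ) := by
      rw [← pow_succ]
      congr 1
      omega
    have hpane : (p : ℚ) ^ (A - 1) ≠ 0 := pow_ne_zero _ (ne_of_gt hppos)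
    have hMval : M * (1 / (p : ℚ) ^ A) = ((P ^ A : ℕ) : ℚ) / (p : ℚ) := by
      rw [hM, hpA, mul_one_div]
      field_simp
    rw [hMval, eq_div_iff (ne_of_gt hppos)] at hw
    have hw' : ((P ^ A : ℕ) : ℚ) = (w : ℚ) * (p : ℚ) := by
      rw [← hw]
      simp
    have hintZ : ((P : ℤ)) ^ A = w * (p : ℤ) := by exact_mod_cast hw'
    have hdvd : (p : ℤ) ∣ (P : ℤ) ^ A := ⟨w, by rw [hintZ]; ring⟩
    have hdvdn : p ∣ P ^ A := by exact_mod_cast hdvd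
    exact hpP (hp.dvd_of_dvd_pow hdvdn)
  · intro hn
    subst hn
    have hset : (Fintype.piFinset fun _ : Fin k => Finset.Icc 1 1).filter
        (fun i => ∀ p q : Fin k, p ≤ q → i p ≤ i q) = {fun _ => 1} := by
      ext i
      simp only [Finset.mem_filter, Fintype.mem_piFinset, Finset.mem_Icc,
        Finset.mem_singleton]
      constructor
      · rintro ⟨h1, _⟩
        funext j
        have := h1 j
        omega
      · rintro rfl
        exact ⟨fun _ => ⟨le_rfl, le_rfl⟩, fun _ _ _ => le_rfl⟩
    rw [HoddStar, hset, Finset.sum_singleton]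
    norm_num
end

section
/- For the function h(x) = x − ((e/2)·log(2x) + 3e/2 + 1/2)·(e·log(2x) + 3e), one has h(x) > 0 for all real x ≥ 62801. Consequently, if n > 62801 is an integer and k is a positive integer with k ≤ (e/2)·log(2n) + 3e/2, then n > 2k(k + 1/2). -/
open Real

set_option maxHeartbeats 1000000 in
theorem stmt18 :
    (∀ x : ℝ, 62801 ≤ x →
      0 < x - ((Real.exp 1 / 2) * Real.log (2 * x) + 3 * Real.exp 1 / 2 + 1 / 2) *
        (Real.exp 1 * Real.log (2 * x) + 3 * Real.exp 1)) ∧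
    (∀ n k : ℕ, 62801 < n → 0 < k →
      (k : ℝ) ≤ (Real.exp 1 / 2) * Real.log (2 * (n : ℝ)) + 3 * Real.exp 1 / 2 →
      2 * (k : ℝ) * ((k : ℝ) + 1 / 2) < (n : ℝ)) := by
  have he0 : (0:ℝ) < Real.exp 1 := Real.exp_pos 1
  have he : Real.exp 1 < 2.7182818286 := Real.exp_one_lt_d9
  have h1 : ∀ x : ℝ, 62801 ≤ x →
      0 < x - ((Real.exp 1 / 2) * Real.log (2 * x) + 3 * Real.exp 1 / 2 + 1 / 2) *
        (Real.exp 1 * Real.log (2 * x) + 3 * Real.exp 1) := by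
    intro x hx
    set s := Real.sqrt (2 * x) with hsdef
    set t := Real.sqrt s with htdef
    have hy0 : (0:ℝ) < 2 * x := by linarith
    have hs0 : 0 ≤ s := Real.sqrt_nonneg _
    have hs2 : s ^ 2 = 2 * x := Real.sq_sqrt (le_of_lt hy0)
    have hs : (354:ℝ) ≤ s := by nlinarith
    have ht0 : 0 ≤ t := Real.sqrt_nonneg _
    have ht2 : t ^ 2 = s := Real.sq_sqrt hs0
    have ht1 : (1:ℝ) ≤ t := by nlinarith
    have hts : t ≤ s := by nlinarith
    have hyt : 2 * x = t ^ 4 := by rw [← hs2, ← ht2]; ring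
    have hlog : Real.log (2 * x) = 4 * Real.log t := by
      rw [hyt]
      rw [show t ^ 4 = t ^ (4:ℕ) from rfl, Real.log_pow]
      norm_num
    have hlt : Real.log t ≤ t - 1 := Real.log_le_sub_one_of_pos (by linarith)
    have hL : Real.log (2 * x) + 3 ≤ 4 * t := by rw [hlog]; linarith
    have hL0 : (0:ℝ) < Real.log (2 * x) := Real.log_pos (by linarith)
    -- product = (e^2/2)(L+3)^2 + (e/2)(L+3)
    set L := Real.log (2 * x) with hLdef
    have key : ((Real.exp 1 / 2) * L + 3 * Real.exp 1 / 2 + 1 / 2) *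
        (Real.exp 1 * L + 3 * Real.exp 1)
        = (Real.exp 1 ^ 2 / 2) * (L + 3) ^ 2 + (Real.exp 1 / 2) * (L + 3) := by ring
    rw [key]
    have hb1 : (Real.exp 1 ^ 2 / 2) * (L + 3) ^ 2 ≤ (Real.exp 1 ^ 2 / 2) * (4 * t) ^ 2 := by
      apply mul_le_mul_of_nonneg_left _ (by positivity)
      apply sq_le_sq' (by linarith) hL
    have hb2 : (Real.exp 1 / 2) * (L + 3) ≤ (Real.exp 1 / 2) * (4 * t) := by
      apply mul_le_mul_of_nonneg_left hL (by positivity)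
    have he2 : Real.exp 1 ^ 2 < 7.39005 := by nlinarith
    -- (e^2/2)(4t)^2 = 8 e^2 t^2 = 8 e^2 s ≤ 8 e^2 s, (e/2)(4t) = 2 e t ≤ 2 e s
    have hfin : (Real.exp 1 ^ 2 / 2) * (4 * t) ^ 2 + (Real.exp 1 / 2) * (4 * t) < x := by
      have h8 : (Real.exp 1 ^ 2 / 2) * (4 * t) ^ 2 = 8 * Real.exp 1 ^ 2 * s := by
        rw [← ht2]; ring
      rw [h8]
      have h2e : (Real.exp 1 / 2) * (4 * t) ≤ 2 * Real.exp 1 * s := by nlinarith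
      have : 8 * Real.exp 1 ^ 2 * s + 2 * Real.exp 1 * s < 65 * s := by nlinarith
      have hx2 : 65 * s < x := by nlinarith
      linarith
    linarith
  refine ⟨h1, ?_⟩
  intro n k hn hk hkA
  have hn' : (62802:ℝ) ≤ (n:ℝ) := by exact_mod_cast hn
  have := h1 n (by linarith)
  have hk1 : (1:ℝ) ≤ (k:ℝ) := by exact_mod_cast hk
  set L := Real.log (2 * (n:ℝ)) with hLdef
  set A := (Real.exp 1 / 2) * L + 3 * Real.exp 1 / 2 with hA
  have hAk : (k:ℝ) ≤ A := hkA
  have h2A : Real.exp 1 * L + 3 * Real.exp 1 = 2 * A := by rw [hA]; ring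
  rw [h2A] at this
  nlinarith [mul_nonneg (sub_nonneg.mpr hAk) (sub_nonneg.mpr hAk),
    mul_nonneg (sub_nonneg.mpr hAk) (by linarith : (0:ℝ) ≤ A + (k:ℝ))]
end
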